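/- arXiv:2105.04334 — 5 statements merged into one kernel-verified Lean document; each statement's English description precedes it below -/
import Mathlib

section
/- Let d be Stern's diatomic sequence and D(N) := Σ_{0≤n<N} d(n). Set κ := log₂ 3 and φ := (1+√5)/2. Then there exists a continuous function Φ : ℝ → ℝ with Φ(u+1) = Φ(u) for all u ∈ ℝ which is Hölder continuous with every exponent α < κ − log₂ φ (i.e., for every such α there is a constant H with |Φ(x) − Φ(y)| ≤ H·|x − y|^α for all x, y), and there exists a constant c > 0 such that |D(N) − N^κ·Φ(log₂ N − ⌊log₂ N⌋)| ≤ c·N^{log₂ φ} for all integers N ≥ 1. -/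
open scoped BigOperators

open Real goldenRatio Filter Topology

namespace SternAux

noncomputable section

variable (d : ℕ → ℕ)

def T (N : ℕ) : ℕ := ∑ n ∈ Finset.range N, d n

def m (x : ℝ) (k : ℕ) : ℕ := ⌊2 ^ k * x⌋₊

def A (x : ℝ) (k : ℕ) : ℝ := (T d (m x k) : ℝ) / 3 ^ k

def E (x : ℝ) : ℝ := limUnder atTop (A d x)

lemma T_succ (N : ℕ) : T d (N + 1) = T d N + d N := Finset.sum_range_succ d N

lemma T_mono {n N : ℕ} (h : n ≤ N) : T d n ≤ T d N := by
  unfold T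
  exact Finset.sum_le_sum_of_subset (Finset.range_subset_range.2 h)

lemma T_double (hd0 : d 0 = 0) (hde : ∀ n : ℕ, d (2 * n) = d n)
    (hdo : ∀ n : ℕ, d (2 * n + 1) = d n + d (n + 1)) (N : ℕ) :
    T d (2 * N) = 3 * T d N + d N := by
  induction N with
  | zero => simp [T, hd0]
  | succ N ih =>
    have h1 : 2 * (N + 1) = (2 * N + 1) + 1 := by ring
    rw [h1, T_succ, T_succ, ih, hde, hdo, T_succ]
    ring
lemma T_double' (hd0 : d 0 = 0) (hde : ∀ n : ℕ, d (2 * n) = d n)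
    (hdo : ∀ n : ℕ, d (2 * n + 1) = d n + d (n + 1)) (N : ℕ) :
    T d (2 * N + 1) = 3 * T d N + 2 * d N := by
  rw [T_succ, T_double d hd0 hde hdo, hde]; ring

lemma d_two_pow (hd1 : d 1 = 1) (hde : ∀ n : ℕ, d (2 * n) = d n) (k : ℕ) :
    d (2 ^ k) = 1 := by
  induction k with
  | zero => simpa using hd1
  | succ k ih => rw [pow_succ, mul_comm, hde]; exact ih

lemma d_fib (hd0 : d 0 = 0) (hd1 : d 1 = 1) (hde : ∀ n : ℕ, d (2 * n) = d n)
    (hdo : ∀ n : ℕ, d (2 * n + 1) = d n + d (n + 1)) :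
    ∀ k : ℕ, ∀ n : ℕ, n < 2 ^ k →
      d n ≤ Nat.fib (k + 1) ∧ d n + d (n + 1) ≤ Nat.fib (k + 2) := by
  intro k
  induction k with
  | zero =>
    intro n hn
    interval_cases n
    simp [hd0, hd1]
  | succ k ih =>
    intro n hn
    have hfib3 : Nat.fib (k + 3) = Nat.fib (k + 1) + Nat.fib (k + 2) := Nat.fib_add_two
    have e1 : Nat.fib (k + 1 + 1) = Nat.fib (k + 2) := rfl
    have e2 : Nat.fib (k + 1 + 2) = Nat.fib (k + 3) := rfl
    rw [e1, e2]
    rcases Nat.even_or_odd n with ⟨mm, hm⟩ | ⟨mm, hm⟩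
    · subst hm
      have hmlt : mm < 2 ^ k := by
        have := hn; rw [pow_succ] at this; omega
      obtain ⟨h1, h2⟩ := ih mm hmlt
      have q1 : d (mm + mm) = d mm := by
        rw [show mm + mm = 2 * mm by omega, hde]
      have q2 : d (mm + mm + 1) = d mm + d (mm + 1) := by
        rw [show mm + mm = 2 * mm by omega, hdo]
      constructor
      · omega
      · omega
    · subst hm
      have hmlt : mm < 2 ^ k := by
        have := hn; rw [pow_succ] at this; omega
      obtain ⟨h1, h2⟩ := ih mm hmlt
      have hm1 : d (mm + 1) ≤ Nat.fib (k + 1) := by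
        rcases lt_or_eq_of_le (Nat.succ_le_of_lt hmlt) with h | h
        · exact (ih (mm + 1) h).1
        · have h' : mm + 1 = 2 ^ k := h
          rw [h', d_two_pow d hd1 hde]
          exact Nat.fib_pos.2 (by omega)
      have q1 : d (2 * mm + 1) = d mm + d (mm + 1) := hdo mm
      have q2 : d (2 * mm + 1 + 1) = d (mm + 1) := by
        rw [show 2 * mm + 1 + 1 = 2 * (mm + 1) by omega, hde]
      constructor
      · omega
      · omega

lemma fib_le_gold : ∀ k : ℕ, (Nat.fib (k + 1) : ℝ) ≤ φ ^ k := by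
  have key : ∀ k : ℕ, (Nat.fib (k + 1) : ℝ) ≤ φ ^ k ∧ (Nat.fib (k + 2) : ℝ) ≤ φ ^ (k + 1) := by
    intro k
    induction k with
    | zero =>
      constructor
      · simp
      · simpa using one_lt_goldenRatio.le
    | succ k ih =>
      obtain ⟨h1, h2⟩ := ih
      refine ⟨h2, ?_⟩
      have : Nat.fib (k + 3) = Nat.fib (k + 1) + Nat.fib (k + 2) := Nat.fib_add_two
      rw [this]
      push_cast
      have hsq : φ ^ (k + 2) = φ ^ k + φ ^ (k + 1) := by
        have := goldenRatio_sq
        calc φ ^ (k + 2) = φ ^ k * φ ^ 2 := by ring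
        _ = φ ^ k * (φ + 1) := by rw [goldenRatio_sq]
        _ = φ ^ k + φ ^ (k + 1) := by ring
      rw [hsq]
      exact add_le_add h1 h2
  exact fun k => (key k).1

lemma d_le_gold (hd0 : d 0 = 0) (hd1 : d 1 = 1) (hde : ∀ n : ℕ, d (2 * n) = d n)
    (hdo : ∀ n : ℕ, d (2 * n + 1) = d n + d (n + 1)) {k n : ℕ} (h : n ≤ 2 ^ k) :
    (d n : ℝ) ≤ φ ^ k := by
  rcases lt_or_eq_of_le h with h | h
  · calc (d n : ℝ) ≤ (Nat.fib (k + 1) : ℝ) := by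
          exact_mod_cast (d_fib d hd0 hd1 hde hdo k n h).1
    _ ≤ φ ^ k := fib_le_gold k
  · rw [h, d_two_pow d hd1 hde]
    exact_mod_cast one_le_pow₀ one_lt_goldenRatio.le


lemma exists_two_pow (x : ℝ) : ∃ L : ℕ, x ≤ 2 ^ L := by
  obtain ⟨L, hL⟩ := pow_unbounded_of_one_lt x (one_lt_two (α := ℝ))
  exact ⟨L, hL.le⟩

lemma m_le {x : ℝ} {L : ℕ} (hx : 0 ≤ x) (hxL : x ≤ 2 ^ L) (k : ℕ) :
    m x k ≤ 2 ^ (k + L) := by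
  have h : (2 : ℝ) ^ k * x ≤ ((2 ^ (k + L) : ℕ) : ℝ) := by
    push_cast
    calc (2 : ℝ) ^ k * x ≤ 2 ^ k * 2 ^ L := by
          have : (0:ℝ) < 2 ^ k := by positivity
          nlinarith
    _ = 2 ^ (k + L) := by rw [pow_add]
  calc m x k ≤ ⌊((2 ^ (k + L) : ℕ) : ℝ)⌋₊ := Nat.floor_mono h
  _ = 2 ^ (k + L) := Nat.floor_natCast _

lemma m_succ {x : ℝ} (hx : 0 ≤ x) (k : ℕ) :
    m x (k + 1) = 2 * m x k ∨ m x (k + 1) = 2 * m x k + 1 := by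
  have hy0 : (0:ℝ) ≤ 2 ^ k * x := by positivity
  have h2 : m x (k + 1) = ⌊2 * (2 ^ k * x)⌋₊ := by
    unfold m; congr 1; ring
  have hlow : 2 * m x k ≤ ⌊2 * (2 ^ k * x)⌋₊ := by
    rw [Nat.le_floor_iff (by positivity)]
    push_cast
    have := Nat.floor_le hy0
    unfold m
    linarith
  have hhigh : ⌊2 * (2 ^ k * x)⌋₊ < 2 * m x k + 2 := by
    rw [Nat.floor_lt (by positivity)]
    push_cast
    have := Nat.lt_floor_add_one (2 ^ k * x)
    unfold m
    linarith
  omega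

lemma A_step (hd0 : d 0 = 0) (hd1 : d 1 = 1) (hde : ∀ n : ℕ, d (2 * n) = d n)
    (hdo : ∀ n : ℕ, d (2 * n + 1) = d n + d (n + 1))
    {x : ℝ} {L : ℕ} (hx : 0 ≤ x) (hxL : x ≤ 2 ^ L) (k : ℕ) :
    dist (A d x k) (A d x (k + 1)) ≤ 2 * φ ^ L / 3 * (φ / 3) ^ k := by
  have hdle : (d (m x k) : ℝ) ≤ φ ^ (k + L) :=
    d_le_gold d hd0 hd1 hde hdo (m_le hx hxL k)
  have hgp : (0:ℝ) < φ ^ (k + L) := pow_pos goldenRatio_pos _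
  have key : ∀ c : ℕ, (c : ℝ) ≤ 2 * φ ^ (k + L) →
      T d (m x (k + 1)) = 3 * T d (m x k) + c →
      dist (A d x k) (A d x (k + 1)) ≤ 2 * φ ^ L / 3 * (φ / 3) ^ k := by
    intro c hc hT
    rw [Real.dist_eq]
    unfold A
    rw [hT]
    push_cast
    have heq : (T d (m x k) : ℝ) / 3 ^ k -
        (3 * (T d (m x k) : ℝ) + c) / 3 ^ (k + 1) = -(c / 3 ^ (k + 1)) := by
      rw [pow_succ]
      field_simp
      ring
    rw [heq, abs_neg, abs_of_nonneg (by positivity)]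
    rw [div_le_iff₀ (by positivity)]
    calc (c : ℝ) ≤ 2 * φ ^ (k + L) := hc
    _ = 2 * φ ^ L / 3 * (φ / 3) ^ k * 3 ^ (k + 1) := by
      have key : ∀ g : ℝ, 2 * g ^ (k + L) = 2 * g ^ L / 3 * (g / 3) ^ k * 3 ^ (k + 1) := by
        intro g
        have h3 : (3:ℝ) ^ k ≠ 0 := by positivity
        rw [div_pow, pow_add, pow_succ]
        field_simp
      exact key φ
  rcases m_succ hx k with h | h
  · exact key (d (m x k)) (by linarith) (by rw [h, T_double d hd0 hde hdo])
  · refine key (2 * d (m x k)) (by push_cast; linarith) ?_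
    rw [h, T_double' d hd0 hde hdo]

lemma r_lt_one : φ / 3 < 1 := by
  have := goldenRatio_lt_two; linarith

lemma cauchy_A (hd0 : d 0 = 0) (hd1 : d 1 = 1) (hde : ∀ n : ℕ, d (2 * n) = d n)
    (hdo : ∀ n : ℕ, d (2 * n + 1) = d n + d (n + 1)) {x : ℝ} (hx : 0 ≤ x) :
    CauchySeq (A d x) := by
  obtain ⟨L, hL⟩ := exists_two_pow x
  exact cauchySeq_of_le_geometric (φ / 3) (2 * φ ^ L / 3) r_lt_one
    (A_step d hd0 hd1 hde hdo hx hL)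

lemma tendsto_A (hd0 : d 0 = 0) (hd1 : d 1 = 1) (hde : ∀ n : ℕ, d (2 * n) = d n)
    (hdo : ∀ n : ℕ, d (2 * n + 1) = d n + d (n + 1)) {x : ℝ} (hx : 0 ≤ x) :
    Tendsto (A d x) atTop (𝓝 (E d x)) :=
  (cauchy_A d hd0 hd1 hde hdo hx).tendsto_limUnder

lemma E_dist (hd0 : d 0 = 0) (hd1 : d 1 = 1) (hde : ∀ n : ℕ, d (2 * n) = d n)
    (hdo : ∀ n : ℕ, d (2 * n + 1) = d n + d (n + 1))
    {x : ℝ} {L : ℕ} (hx : 0 ≤ x) (hxL : x ≤ 2 ^ L) (k : ℕ) :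
    dist (A d x k) (E d x) ≤ 2 * φ ^ L / (3 - φ) * (φ / 3) ^ k := by
  have h := dist_le_of_le_geometric_of_tendsto (φ / 3) (2 * φ ^ L / 3) r_lt_one
    (A_step d hd0 hd1 hde hdo hx hxL) (tendsto_A d hd0 hd1 hde hdo hx) k
  have heq : 2 * φ ^ L / 3 * (φ / 3) ^ k / (1 - φ / 3)
      = 2 * φ ^ L / (3 - φ) * (φ / 3) ^ k := by
    have key : ∀ g : ℝ, g < 3 →
        2 * g ^ L / 3 * (g / 3) ^ k / (1 - g / 3) = 2 * g ^ L / (3 - g) * (g / 3) ^ k := by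
      intro g hg
      have h1 : (1:ℝ) - g / 3 ≠ 0 := by intro h; nlinarith
      have h2 : (3:ℝ) - g ≠ 0 := by intro h; nlinarith
      field_simp
    exact key φ (by have := goldenRatio_lt_two; linarith)
  rw [heq] at h
  exact h

lemma E_scale (hd0 : d 0 = 0) (hd1 : d 1 = 1) (hde : ∀ n : ℕ, d (2 * n) = d n)
    (hdo : ∀ n : ℕ, d (2 * n + 1) = d n + d (n + 1)) {x : ℝ} (hx : 0 ≤ x) :
    E d (2 * x) = 3 * E d x := by
  have h1 : ∀ k, A d (2 * x) k = 3 * A d x (k + 1) := by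
    intro k
    unfold A m
    have hxx : (2:ℝ) ^ k * (2 * x) = 2 ^ (k + 1) * x := by ring
    rw [hxx, pow_succ 3 k]
    field_simp
  have h2 : Tendsto (fun k => A d x (k + 1)) atTop (𝓝 (E d x)) :=
    (tendsto_A d hd0 hd1 hde hdo hx).comp (tendsto_add_atTop_nat 1)
  have h3 : Tendsto (A d (2 * x)) atTop (𝓝 (3 * E d x)) := by
    have he : A d (2 * x) = fun k => 3 * A d x (k + 1) := funext h1
    rw [he]
    exact h2.const_mul 3
  exact tendsto_nhds_unique (tendsto_A d hd0 hd1 hde hdo (by positivity)) h3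

lemma A_diff (hd0 : d 0 = 0) (hd1 : d 1 = 1) (hde : ∀ n : ℕ, d (2 * n) = d n)
    (hdo : ∀ n : ℕ, d (2 * n + 1) = d n + d (n + 1))
    {x y : ℝ} {L : ℕ} (hx : 0 ≤ x) (hxy : x ≤ y) (hyL : y ≤ 2 ^ L)
    {k : ℕ} (hk : 2 ^ k * (y - x) ≤ 1) :
    |A d x k - A d y k| ≤ φ ^ L * (φ / 3) ^ k := by
  have hy : (0:ℝ) ≤ y := le_trans hx hxy
  have hm1 : m x k ≤ m y k := Nat.floor_mono (by nlinarith [pow_pos (zero_lt_two (α := ℝ)) k])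
  have hm2 : m y k ≤ m x k + 1 := by
    have h1 : (2:ℝ) ^ k * y < (m x k : ℝ) + 2 := by
      have := Nat.lt_floor_add_one (2 ^ k * x)
      unfold m
      nlinarith [pow_pos (zero_lt_two (α := ℝ)) k]
    have : m y k < m x k + 2 := by
      unfold m at h1 ⊢
      rw [Nat.floor_lt (by positivity)]
      push_cast
      exact h1
    omega
  have hdle : (d (m x k) : ℝ) ≤ φ ^ (k + L) :=
    d_le_gold d hd0 hd1 hde hdo (m_le hx (le_trans hxy hyL) k)
  have hT : (T d (m y k) : ℝ) - T d (m x k) ≤ φ ^ (k + L) := by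
    rcases eq_or_lt_of_le hm1 with h | h
    · rw [h]
      simp only [sub_self]
      positivity
    · have hmy : m y k = m x k + 1 := by omega
      rw [hmy, T_succ]
      push_cast
      linarith
  have hT0 : (0:ℝ) ≤ (T d (m y k) : ℝ) - T d (m x k) := by
    have := T_mono d hm1
    have : (T d (m x k) : ℝ) ≤ T d (m y k) := by exact_mod_cast this
    linarith
  have h3 : (0:ℝ) < 3 ^ k := by positivity
  unfold A
  rw [div_sub_div_same, abs_div, abs_of_pos h3, abs_sub_comm, abs_of_nonneg hT0,
    div_le_iff₀ h3]
  calc (T d (m y k) : ℝ) - T d (m x k) ≤ φ ^ (k + L) := hT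
  _ = φ ^ L * (φ / 3) ^ k * 3 ^ k := by
    have key : ∀ g : ℝ, g ^ (k + L) = g ^ L * (g / 3) ^ k * 3 ^ k := by
      intro g
      have h3' : (3:ℝ) ^ k ≠ 0 := by positivity
      rw [div_pow, pow_add]
      field_simp
    exact key φ

lemma beta_pos : 0 < logb 2 3 - logb 2 φ := by
  have h := Real.logb_lt_logb (b := 2) (by norm_num) goldenRatio_pos
    (by have := goldenRatio_lt_two; linarith : φ < 3)
  linarith

lemma beta_le_one : logb 2 3 - logb 2 φ ≤ 1 := by
  have h5 : (2:ℝ) ≤ √5 := by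
    rw [show (2:ℝ) = √4 by rw [show (4:ℝ) = 2^2 by norm_num, Real.sqrt_sq (by norm_num)]]
    exact Real.sqrt_le_sqrt (by norm_num)
  have h1 : logb 2 3 - logb 2 φ = logb 2 (3 / φ) :=
    (Real.logb_div (by norm_num) goldenRatio_ne_zero).symm
  have h2 : (3:ℝ) / φ ≤ 2 := by
    rw [div_le_iff₀ goldenRatio_pos]
    rw [goldenRatio]
    linarith
  rw [h1]
  calc logb 2 (3 / φ) ≤ logb 2 2 :=
        Real.logb_le_logb_of_le (by norm_num) (by positivity) h2
  _ = 1 := Real.logb_self_eq_one (by norm_num)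

lemma r_pow_eq (k : ℕ) :
    (φ / 3) ^ k = (((2:ℝ) ^ k)⁻¹) ^ (logb 2 3 - logb 2 φ) := by
  set β := logb 2 3 - logb 2 φ with hβ
  have h1 : (2:ℝ) ^ (-β) = φ / 3 := by
    rw [hβ, neg_sub, Real.rpow_sub (by norm_num : (0:ℝ) < 2),
      Real.rpow_logb (by norm_num) (by norm_num) goldenRatio_pos,
      Real.rpow_logb (by norm_num) (by norm_num) (by norm_num : (0:ℝ) < 3)]
  rw [← h1, ← Real.rpow_natCast ((2:ℝ) ^ (-β)) k, ← Real.rpow_mul (by norm_num : (0:ℝ) ≤ 2),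
    Real.inv_rpow (by positivity), ← Real.rpow_natCast (2:ℝ) k,
    ← Real.rpow_mul (by norm_num : (0:ℝ) ≤ 2), ← Real.rpow_neg (by norm_num : (0:ℝ) ≤ 2)]
  congr 1
  ring

lemma k_choice {t : ℝ} (h0 : 0 < t) (h1 : t ≤ 1) :
    ∃ k : ℕ, 2 ^ k * t ≤ 1 ∧ (1:ℝ) ≤ 2 ^ (k + 1) * t := by
  have hinv : (1:ℝ) ≤ 1 / t := by
    rw [le_div_iff₀ h0]; linarith
  set n := ⌊1 / t⌋₊ with hn
  have hn1 : 1 ≤ n := by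
    rw [hn, Nat.le_floor_iff (by positivity)]
    exact_mod_cast hinv
  refine ⟨Nat.log 2 n, ?_, ?_⟩
  · have h2 : (2:ℝ) ^ Nat.log 2 n ≤ n := by
      exact_mod_cast Nat.pow_log_le_self 2 (by omega)
    have h3 : (n:ℝ) ≤ 1 / t := Nat.floor_le (by positivity)
    rw [← le_div_iff₀ h0]
    linarith
  · have h2 : (n:ℝ) + 1 ≤ 2 ^ (Nat.log 2 n + 1) := by
      exact_mod_cast Nat.lt_pow_succ_log_self (by norm_num) n
    have h3 : 1 / t < (n:ℝ) + 1 := Nat.lt_floor_add_one (1 / t)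
    have h4 : 1 / t ≤ 2 ^ (Nat.log 2 n + 1) := by linarith
    rw [div_le_iff₀ h0] at h4
    linarith

lemma E_diff (hd0 : d 0 = 0) (hd1 : d 1 = 1) (hde : ∀ n : ℕ, d (2 * n) = d n)
    (hdo : ∀ n : ℕ, d (2 * n + 1) = d n + d (n + 1))
    {x y : ℝ} (hx : 0 ≤ x) (hxy : x ≤ y) (hy4 : y ≤ 4)
    {k : ℕ} (hk : 2 ^ k * (y - x) ≤ 1) :
    |E d x - E d y| ≤ (4 * φ ^ 2 / (3 - φ) + φ ^ 2) * (φ / 3) ^ k := by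
  have h4 : (4:ℝ) = 2 ^ (2:ℕ) := by norm_num
  have hxL : x ≤ 2 ^ (2:ℕ) := by rw [← h4]; linarith
  have hyL : y ≤ 2 ^ (2:ℕ) := by rw [← h4]; exact hy4
  have e1 := E_dist d hd0 hd1 hde hdo hx hxL k
  have e2 := E_dist d hd0 hd1 hde hdo (le_trans hx hxy) hyL k
  have e3 := A_diff d hd0 hd1 hde hdo hx hxy hyL hk
  rw [Real.dist_eq] at e1 e2
  have habs : |E d x - E d y| ≤ |A d x k - E d x| + |A d x k - A d y k|
      + |A d y k - E d y| := by
    have := abs_sub (E d x) (E d y)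
    calc |E d x - E d y|
        = |(A d x k - E d y) - (A d x k - E d x)| := by ring_nf
      _ ≤ |A d x k - E d y| + |A d x k - E d x| := abs_sub _ _
      _ ≤ (|A d x k - A d y k| + |A d y k - E d y|) + |A d x k - E d x| := by
          have : |A d x k - E d y| = |(A d x k - A d y k) + (A d y k - E d y)| := by ring_nf
          rw [this]
          exact add_le_add (abs_add_le _ _) le_rfl
      _ = _ := by ring
  calc |E d x - E d y| ≤ 2 * φ ^ 2 / (3 - φ) * (φ / 3) ^ k + φ ^ 2 * (φ / 3) ^ k
        + 2 * φ ^ 2 / (3 - φ) * (φ / 3) ^ k := by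
        refine le_trans habs ?_
        exact add_le_add (add_le_add e1 e3) e2
  _ = (4 * φ ^ 2 / (3 - φ) + φ ^ 2) * (φ / 3) ^ k := by ring

lemma E_bound_ex (hd0 : d 0 = 0) (hd1 : d 1 = 1) (hde : ∀ n : ℕ, d (2 * n) = d n)
    (hdo : ∀ n : ℕ, d (2 * n + 1) = d n + d (n + 1)) :
    ∃ M : ℝ, 0 ≤ M ∧ ∀ x : ℝ, 0 ≤ x → x ≤ 4 → |E d x| ≤ M := by
  have h3φ : (0:ℝ) < 3 - φ := by have := goldenRatio_lt_two; linarith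
  refine ⟨2 * φ ^ 2 / (3 - φ) + T d 4, by positivity, fun x hx hx4 => ?_⟩
  have h4 : (4:ℝ) = 2 ^ (2:ℕ) := by norm_num
  have e1 := E_dist d hd0 hd1 hde hdo hx (by rw [← h4]; exact hx4) 0
  rw [Real.dist_eq] at e1
  simp only [pow_zero, mul_one] at e1
  have hA : |A d x 0| ≤ (T d 4 : ℝ) := by
    unfold A m
    simp only [pow_zero, one_mul]
    rw [abs_of_nonneg (by positivity)]
    have hfl : ⌊x⌋₊ ≤ 4 := by
      have : ⌊x⌋₊ ≤ ⌊(4:ℝ)⌋₊ := Nat.floor_mono hx4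
      simpa using this
    have := T_mono d hfl
    have h' : (T d ⌊x⌋₊ : ℝ) ≤ (T d 4 : ℝ) := by exact_mod_cast this
    linarith
  calc |E d x| = |A d x 0 - (A d x 0 - E d x)| := by ring_nf
  _ ≤ |A d x 0| + |A d x 0 - E d x| := abs_sub _ _
  _ ≤ T d 4 + 2 * φ ^ 2 / (3 - φ) := add_le_add hA e1
  _ = 2 * φ ^ 2 / (3 - φ) + T d 4 := by ring

lemma E_holder_ex (hd0 : d 0 = 0) (hd1 : d 1 = 1) (hde : ∀ n : ℕ, d (2 * n) = d n)
    (hdo : ∀ n : ℕ, d (2 * n + 1) = d n + d (n + 1)) :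
    ∃ K : ℝ, 0 ≤ K ∧ ∀ x y : ℝ, 0 ≤ x → x ≤ 4 → 0 ≤ y → y ≤ 4 →
      |E d x - E d y| ≤ K * |x - y| ^ (logb 2 3 - logb 2 φ) := by
  obtain ⟨M, hM0, hM⟩ := E_bound_ex d hd0 hd1 hde hdo
  set β := logb 2 3 - logb 2 φ with hβ
  set K1 : ℝ := 4 * φ ^ 2 / (3 - φ) + φ ^ 2 with hK1
  have hK10 : 0 ≤ K1 := by
    have h3 : (0:ℝ) < 3 - φ := by have := goldenRatio_lt_two; linarith
    positivity
  refine ⟨K1 * 2 ^ β + 2 * M, by positivity, ?_⟩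
  have key : ∀ x y : ℝ, 0 ≤ x → x ≤ 4 → 0 ≤ y → y ≤ 4 → x ≤ y →
      |E d x - E d y| ≤ (K1 * 2 ^ β + 2 * M) * |x - y| ^ β := by
    intro x y hx hx4 hy hy4 hxy
    rcases eq_or_lt_of_le hxy with h | h
    · subst h
      simp
      positivity
    set t := y - x with ht
    have ht0 : 0 < t := by simp [ht]; linarith
    have habs : |x - y| = t := by rw [abs_sub_comm, abs_of_pos ht0]
    have htβ : (0:ℝ) ≤ t ^ β := Real.rpow_nonneg ht0.le β
    rcases le_or_gt t 1 with h1 | h1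
    · obtain ⟨k, hk1, hk2⟩ := k_choice ht0 h1
      have hE := E_diff d hd0 hd1 hde hdo hx hxy hy4 (k := k) (by rw [← ht]; exact hk1)
      have hr : (φ / 3) ^ k ≤ 2 ^ β * t ^ β := by
        rw [r_pow_eq, ← hβ]
        have hle : ((2:ℝ) ^ k)⁻¹ ≤ 2 * t := by
          have hp : (0:ℝ) < 2 ^ k := by positivity
          rw [inv_le_iff_one_le_mul₀ hp]
          calc (1:ℝ) ≤ 2 ^ (k + 1) * t := hk2
          _ = 2 * t * 2 ^ k := by rw [pow_succ]; ring
        calc (((2:ℝ) ^ k)⁻¹) ^ β ≤ (2 * t) ^ β :=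
              Real.rpow_le_rpow (by positivity) hle (by linarith [beta_pos])
        _ = 2 ^ β * t ^ β := Real.mul_rpow (by norm_num) ht0.le
      calc |E d x - E d y| ≤ K1 * (φ / 3) ^ k := hE
      _ ≤ K1 * (2 ^ β * t ^ β) := by
          exact mul_le_mul_of_nonneg_left hr hK10
      _ ≤ (K1 * 2 ^ β + 2 * M) * t ^ β := by nlinarith
      _ = (K1 * 2 ^ β + 2 * M) * |x - y| ^ β := by rw [habs]
    · have h2M : |E d x - E d y| ≤ 2 * M := by
        calc |E d x - E d y| ≤ |E d x| + |E d y| := abs_sub _ _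
        _ ≤ M + M := add_le_add (hM x hx hx4) (hM y hy hy4)
        _ = 2 * M := by ring
      have htb1 : (1:ℝ) ≤ t ^ β := by
        calc (1:ℝ) = 1 ^ β := (Real.one_rpow β).symm
        _ ≤ t ^ β := Real.rpow_le_rpow (by norm_num) h1.le (by linarith [beta_pos])
      have h2b : (0:ℝ) ≤ K1 * 2 ^ β := by positivity
      calc |E d x - E d y| ≤ 2 * M := h2M
      _ ≤ 2 * M * t ^ β := by nlinarith
      _ ≤ (K1 * 2 ^ β + 2 * M) * t ^ β := by nlinarith
      _ = (K1 * 2 ^ β + 2 * M) * |x - y| ^ β := by rw [habs]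
  intro x y hx hx4 hy hy4
  rcases le_total x y with h | h
  · exact key x y hx hx4 hy hy4 h
  · rw [abs_sub_comm (E d x), abs_sub_comm x]
    exact key y x hy hy4 hx hx4 h

def Phi (u : ℝ) : ℝ := E d ((2:ℝ) ^ u) * (3:ℝ) ^ (-u)

lemma Phi_periodic (hd0 : d 0 = 0) (hd1 : d 1 = 1) (hde : ∀ n : ℕ, d (2 * n) = d n)
    (hdo : ∀ n : ℕ, d (2 * n + 1) = d n + d (n + 1)) :
    Function.Periodic (Phi d) 1 := by
  intro u
  unfold Phi
  have h2 : (2:ℝ) ^ (u + 1) = 2 * (2:ℝ) ^ u := by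
    rw [Real.rpow_add_one (by norm_num : (2:ℝ) ≠ 0)]; ring
  have h3 : (3:ℝ) ^ (-(u + 1)) = (3:ℝ) ^ (-u) / 3 := by
    rw [show -(u + 1) = -u + (-1) by ring, Real.rpow_add (by norm_num : (0:ℝ) < 3),
      Real.rpow_neg_one]
    ring
  rw [h2, h3, E_scale d hd0 hd1 hde hdo (by positivity)]
  ring

lemma Phi_shift (hd0 : d 0 = 0) (hd1 : d 1 = 1) (hde : ∀ n : ℕ, d (2 * n) = d n)
    (hdo : ∀ n : ℕ, d (2 * n + 1) = d n + d (n + 1)) (u : ℝ) (n : ℤ) :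
    Phi d (u - n) = Phi d u := by
  have h := (Phi_periodic d hd0 hd1 hde hdo).sub_int_mul_eq (x := u) n
  rw [mul_one] at h
  exact h

lemma rpow_two_le_four {u : ℝ} (h0 : 0 ≤ u) (h2 : u ≤ 2) :
    (1:ℝ) ≤ (2:ℝ) ^ u ∧ (2:ℝ) ^ u ≤ 4 := by
  constructor
  · calc (1:ℝ) = (2:ℝ) ^ (0:ℝ) := (Real.rpow_zero 2).symm
    _ ≤ (2:ℝ) ^ u := Real.rpow_le_rpow_of_exponent_le (by norm_num) h0
  · have h4 : (2:ℝ) ^ (2:ℝ) = 4 := by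
      rw [show (2:ℝ) = ((2:ℕ):ℝ) from by norm_num, Real.rpow_natCast]
      norm_num
    calc (2:ℝ) ^ u ≤ (2:ℝ) ^ (2:ℝ) := Real.rpow_le_rpow_of_exponent_le (by norm_num) h2
    _ = 4 := h4

lemma Phi_bound_ex (hd0 : d 0 = 0) (hd1 : d 1 = 1) (hde : ∀ n : ℕ, d (2 * n) = d n)
    (hdo : ∀ n : ℕ, d (2 * n + 1) = d n + d (n + 1)) :
    ∃ M : ℝ, 0 ≤ M ∧ (∀ u : ℝ, |Phi d u| ≤ M) ∧
      (∀ x : ℝ, 0 ≤ x → x ≤ 4 → |E d x| ≤ M) := by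
  obtain ⟨M, hM0, hM⟩ := E_bound_ex d hd0 hd1 hde hdo
  refine ⟨M, hM0, ?_, hM⟩
  have key : ∀ u : ℝ, 0 ≤ u → u ≤ 2 → |Phi d u| ≤ M := by
    intro u h0 h2
    obtain ⟨hu1, hu4⟩ := rpow_two_le_four h0 h2
    unfold Phi
    rw [abs_mul]
    have h3u : (3:ℝ) ^ (-u) ≤ 1 :=
      Real.rpow_le_one_of_one_le_of_nonpos (by norm_num) (by linarith)
    have h3u0 : (0:ℝ) ≤ (3:ℝ) ^ (-u) := (Real.rpow_pos_of_pos (by norm_num) _).le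
    calc |E d ((2:ℝ) ^ u)| * |(3:ℝ) ^ (-u)| ≤ M * 1 := by
          apply mul_le_mul (hM _ (by linarith) hu4) _ (abs_nonneg _) hM0
          rw [abs_of_nonneg h3u0]
          exact h3u
    _ = M := mul_one M
  intro u
  rw [← Phi_shift d hd0 hd1 hde hdo u ⌊u⌋]
  apply key
  · rw [Int.self_sub_floor]
    exact Int.fract_nonneg u
  · rw [Int.self_sub_floor]
    linarith [Int.fract_lt_one u]

set_option maxHeartbeats 1000000 in
lemma Phi_local_holder (hd0 : d 0 = 0) (hd1 : d 1 = 1) (hde : ∀ n : ℕ, d (2 * n) = d n)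
    (hdo : ∀ n : ℕ, d (2 * n + 1) = d n + d (n + 1)) :
    ∃ K : ℝ, 0 ≤ K ∧ ∀ u v : ℝ, 0 ≤ v → v ≤ u → u ≤ 2 → u - v ≤ 1 / 2 →
      |Phi d u - Phi d v| ≤ K * (u - v) ^ (logb 2 3 - logb 2 φ) := by
  obtain ⟨K, hK0, hK⟩ := E_holder_ex d hd0 hd1 hde hdo
  obtain ⟨M, hM0, _, hME⟩ := Phi_bound_ex d hd0 hd1 hde hdo
  set β := logb 2 3 - logb 2 φ with hβ
  have hβ0 : 0 < β := beta_pos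
  have hβ1 : β ≤ 1 := beta_le_one
  refine ⟨K * 8 ^ β + 3 * M, by positivity, ?_⟩
  intro u v hv0 hvu hu2 ht2
  set t := u - v with htdef
  have ht0 : 0 ≤ t := by simp [htdef]; linarith
  rcases eq_or_lt_of_le ht0 with h | h
  · have huv : u = v := by
      have h' : u - v = 0 := by rw [← htdef, ← h]
      linarith
    rw [huv, sub_self, abs_zero]
    exact mul_nonneg (by positivity) (Real.rpow_nonneg ht0 β)
  have htpos : 0 < t := h
  have htβ : (0:ℝ) ≤ t ^ β := Real.rpow_nonneg ht0 β
  obtain ⟨hv1, hv4⟩ := rpow_two_le_four hv0 (by linarith)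
  obtain ⟨hu1, hu4⟩ := rpow_two_le_four (by linarith) hu2
  have hlog2 : Real.log 2 ≤ 0.7 := by linarith [Real.log_two_lt_d9]
  have hlog2p : 0 < Real.log 2 := Real.log_pos (by norm_num)
  have hlog3p : 0 < Real.log 3 := Real.log_pos (by norm_num)
  have hlog3 : Real.log 3 ≤ 1.4 := by
    have h34 : Real.log 3 ≤ Real.log 4 := Real.log_le_log (by norm_num) (by norm_num)
    have h4 : Real.log 4 = 2 * Real.log 2 := by
      rw [show (4:ℝ) = 2 ^ (2:ℕ) by norm_num, Real.log_pow]
      push_cast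
      ring
    linarith
  -- bound |2^u - 2^v| ≤ 8 t
  have hpow2 : |(2:ℝ) ^ u - (2:ℝ) ^ v| ≤ 8 * t := by
    have hsplit : (2:ℝ) ^ u = (2:ℝ) ^ v * (2:ℝ) ^ t := by
      rw [← Real.rpow_add (by norm_num : (0:ℝ) < 2)]
      congr 1
      rw [htdef]
      ring
    have hexp : (2:ℝ) ^ t = Real.exp (Real.log 2 * t) := Real.rpow_def_of_pos (by norm_num) t
    have habs : |Real.log 2 * t| ≤ 1 := by
      rw [abs_of_nonneg (by positivity)]
      nlinarith
    have hb := Real.abs_exp_sub_one_le habs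
    have h2t1 : |(2:ℝ) ^ t - 1| ≤ 2 * t := by
      rw [hexp]
      calc |Real.exp (Real.log 2 * t) - 1| ≤ 2 * |Real.log 2 * t| := hb
      _ ≤ 2 * t := by
          rw [abs_of_nonneg (by positivity)]
          nlinarith
    calc |(2:ℝ) ^ u - (2:ℝ) ^ v| = (2:ℝ) ^ v * |(2:ℝ) ^ t - 1| := by
          rw [hsplit,
            show (2:ℝ) ^ v * (2:ℝ) ^ t - (2:ℝ) ^ v = (2:ℝ) ^ v * ((2:ℝ) ^ t - 1) from by ring,
            abs_mul, abs_of_nonneg (le_trans zero_le_one hv1 : (0:ℝ) ≤ (2:ℝ) ^ v)]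
    _ ≤ 4 * (2 * t) := by
        apply mul_le_mul hv4 h2t1 (abs_nonneg _) (by norm_num)
    _ = 8 * t := by ring
  -- bound |3^{-u} - 3^{-v}| ≤ 3 t
  have hpow3 : |(3:ℝ) ^ (-u) - (3:ℝ) ^ (-v)| ≤ 3 * t := by
    have hsplit : (3:ℝ) ^ (-u) = (3:ℝ) ^ (-v) * (3:ℝ) ^ (-t) := by
      rw [← Real.rpow_add (by norm_num : (0:ℝ) < 3)]
      congr 1
      rw [htdef]
      ring
    have hexp : (3:ℝ) ^ (-t) = Real.exp (Real.log 3 * (-t)) := Real.rpow_def_of_pos (by norm_num) _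
    have habs : |Real.log 3 * (-t)| ≤ 1 := by
      rw [abs_mul, abs_of_nonneg hlog3p.le, abs_neg, abs_of_nonneg ht0]
      nlinarith
    have hb := Real.abs_exp_sub_one_le habs
    have h3t1 : |(3:ℝ) ^ (-t) - 1| ≤ 3 * t := by
      rw [hexp]
      calc |Real.exp (Real.log 3 * (-t)) - 1| ≤ 2 * |Real.log 3 * (-t)| := hb
      _ ≤ 3 * t := by
          rw [abs_mul, abs_of_nonneg hlog3p.le, abs_neg, abs_of_nonneg ht0]
          nlinarith
    have h3v : (0:ℝ) < (3:ℝ) ^ (-v) := Real.rpow_pos_of_pos (by norm_num) _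
    have h3v1 : (3:ℝ) ^ (-v) ≤ 1 :=
      Real.rpow_le_one_of_one_le_of_nonpos (by norm_num) (by linarith)
    calc |(3:ℝ) ^ (-u) - (3:ℝ) ^ (-v)| = (3:ℝ) ^ (-v) * |(3:ℝ) ^ (-t) - 1| := by
          rw [hsplit,
            show (3:ℝ) ^ (-v) * (3:ℝ) ^ (-t) - (3:ℝ) ^ (-v)
              = (3:ℝ) ^ (-v) * ((3:ℝ) ^ (-t) - 1) from by ring,
            abs_mul, abs_of_nonneg h3v.le]
    _ ≤ 1 * (3 * t) := by
        apply mul_le_mul h3v1 h3t1 (abs_nonneg _) (by norm_num)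
    _ = 3 * t := by ring
  -- combine
  have h3u0 : (0:ℝ) < (3:ℝ) ^ (-u) := Real.rpow_pos_of_pos (by norm_num) _
  have h3u1 : (3:ℝ) ^ (-u) ≤ 1 :=
    Real.rpow_le_one_of_one_le_of_nonpos (by norm_num) (by linarith)
  have hEE : |E d ((2:ℝ) ^ u) - E d ((2:ℝ) ^ v)| ≤ K * 8 ^ β * t ^ β := by
    have h1 := hK ((2:ℝ) ^ u) ((2:ℝ) ^ v) (by linarith) hu4 (by linarith) hv4
    have h2 : |(2:ℝ) ^ u - (2:ℝ) ^ v| ^ β ≤ (8 * t) ^ β :=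
      Real.rpow_le_rpow (abs_nonneg _) hpow2 hβ0.le
    have h3 : ((8:ℝ) * t) ^ β = 8 ^ β * t ^ β := Real.mul_rpow (by norm_num) ht0
    calc |E d ((2:ℝ) ^ u) - E d ((2:ℝ) ^ v)| ≤ K * |(2:ℝ) ^ u - (2:ℝ) ^ v| ^ β := h1
    _ ≤ K * (8 * t) ^ β := mul_le_mul_of_nonneg_left h2 hK0
    _ = K * 8 ^ β * t ^ β := by rw [h3]; ring
  have hEv : |E d ((2:ℝ) ^ v)| ≤ M := hME _ (by linarith) hv4
  have htt : t ≤ t ^ β := by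
    calc t = t ^ (1:ℝ) := (Real.rpow_one t).symm
    _ ≤ t ^ β := Real.rpow_le_rpow_of_exponent_ge htpos (by linarith) hβ1
  have hdecomp : Phi d u - Phi d v =
      (E d ((2:ℝ) ^ u) - E d ((2:ℝ) ^ v)) * (3:ℝ) ^ (-u)
      + E d ((2:ℝ) ^ v) * ((3:ℝ) ^ (-u) - (3:ℝ) ^ (-v)) := by
    unfold Phi
    ring
  calc |Phi d u - Phi d v|
      ≤ |(E d ((2:ℝ) ^ u) - E d ((2:ℝ) ^ v)) * (3:ℝ) ^ (-u)|
        + |E d ((2:ℝ) ^ v) * ((3:ℝ) ^ (-u) - (3:ℝ) ^ (-v))| := by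
        rw [hdecomp]
        exact abs_add_le _ _
  _ ≤ K * 8 ^ β * t ^ β * 1 + M * (3 * t) := by
      rw [abs_mul, abs_mul]
      apply add_le_add
      · apply mul_le_mul hEE _ (abs_nonneg _) (by positivity)
        rw [abs_of_nonneg h3u0.le]
        exact h3u1
      · exact mul_le_mul hEv hpow3 (abs_nonneg _) hM0
  _ ≤ K * 8 ^ β * t ^ β + 3 * M * t ^ β := by nlinarith
  _ = (K * 8 ^ β + 3 * M) * t ^ β := by ring

lemma Phi_global_holder (hd0 : d 0 = 0) (hd1 : d 1 = 1) (hde : ∀ n : ℕ, d (2 * n) = d n)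
    (hdo : ∀ n : ℕ, d (2 * n + 1) = d n + d (n + 1)) :
    ∃ K : ℝ, 0 ≤ K ∧ ∀ u v : ℝ,
      |Phi d u - Phi d v| ≤ K * |u - v| ^ (logb 2 3 - logb 2 φ) := by
  obtain ⟨K, hK0, hK⟩ := Phi_local_holder d hd0 hd1 hde hdo
  obtain ⟨M, hM0, hM, _⟩ := Phi_bound_ex d hd0 hd1 hde hdo
  set β := logb 2 3 - logb 2 φ with hβ
  have hβ0 : 0 < β := beta_pos
  refine ⟨K + 2 * M * 2 ^ β, by positivity, ?_⟩
  have key : ∀ u v : ℝ, v ≤ u →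
      |Phi d u - Phi d v| ≤ (K + 2 * M * 2 ^ β) * |u - v| ^ β := by
    intro u v hvu
    set t := u - v with htdef
    have ht0 : 0 ≤ t := by rw [htdef]; linarith
    have habs : |u - v| = t := abs_of_nonneg ht0
    rw [habs]
    have htβ : (0:ℝ) ≤ t ^ β := Real.rpow_nonneg ht0 β
    rcases le_or_gt t (1 / 2) with h | h
    · -- reduce to the window [0, 2] using periodicity
      set n : ℤ := ⌊v⌋ with hn
      have hv' : Phi d (v - n) = Phi d v := Phi_shift d hd0 hd1 hde hdo v n
      have hu' : Phi d (u - n) = Phi d u := Phi_shift d hd0 hd1 hde hdo u n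
      have hfr0 : 0 ≤ v - n := by
        rw [hn, Int.self_sub_floor]
        exact Int.fract_nonneg v
      have hfr1 : v - n < 1 := by
        rw [hn, Int.self_sub_floor]
        exact Int.fract_lt_one v
      have hd1' : u - n ≤ 2 := by
        have : u - n = (v - n) + t := by rw [htdef]; ring
        rw [this]
        linarith
      have hdiff : (u - n) - (v - n) = t := by rw [htdef]; ring
      have := hK (u - n) (v - n) hfr0 (by linarith) hd1' (by rw [hdiff]; exact h)
      rw [hu', hv', hdiff] at this
      calc |Phi d u - Phi d v| ≤ K * t ^ β := this
      _ ≤ (K + 2 * M * 2 ^ β) * t ^ β := by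
          apply mul_le_mul_of_nonneg_right _ htβ
          have h2β : (0:ℝ) ≤ 2 ^ β := Real.rpow_nonneg (by norm_num) β
          nlinarith
    · have h2M : |Phi d u - Phi d v| ≤ 2 * M := by
        calc |Phi d u - Phi d v| ≤ |Phi d u| + |Phi d v| := abs_sub _ _
        _ ≤ M + M := add_le_add (hM u) (hM v)
        _ = 2 * M := by ring
      have h2t : (1:ℝ) ≤ 2 ^ β * t ^ β := by
        have h1 : (1:ℝ) ≤ 2 * t := by linarith
        calc (1:ℝ) = 1 ^ β := (Real.one_rpow β).symm
        _ ≤ (2 * t) ^ β := Real.rpow_le_rpow (by norm_num) h1 hβ0.le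
        _ = 2 ^ β * t ^ β := Real.mul_rpow (by norm_num) ht0
      calc |Phi d u - Phi d v| ≤ 2 * M := h2M
      _ = 2 * M * 1 := by ring
      _ ≤ 2 * M * (2 ^ β * t ^ β) := by nlinarith
      _ = 2 * M * 2 ^ β * t ^ β := by ring
      _ ≤ (K + 2 * M * 2 ^ β) * t ^ β := by nlinarith
  intro u v
  rcases le_total v u with h | h
  · exact key u v h
  · rw [abs_sub_comm (Phi d u), abs_sub_comm u]
    exact key v u h

lemma Phi_continuous (hd0 : d 0 = 0) (hd1 : d 1 = 1) (hde : ∀ n : ℕ, d (2 * n) = d n)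
    (hdo : ∀ n : ℕ, d (2 * n + 1) = d n + d (n + 1)) :
    Continuous (Phi d) := by
  obtain ⟨K, hK0, hK⟩ := Phi_global_holder d hd0 hd1 hde hdo
  set β := logb 2 3 - logb 2 φ with hβ
  have hβ0 : 0 < β := beta_pos
  rw [continuous_iff_continuousAt]
  intro u₀
  rw [Metric.continuousAt_iff]
  intro ε hε
  refine ⟨min 1 ((ε / (K + 1)) ^ (β⁻¹)), lt_min one_pos (Real.rpow_pos_of_pos (by positivity) _), ?_⟩
  intro u hu
  rw [Real.dist_eq] at hu ⊢
  have h1 : |u - u₀| ^ β ≤ ε / (K + 1) := by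
    have hle : |u - u₀| ≤ (ε / (K + 1)) ^ (β⁻¹) :=
      le_of_lt (lt_of_lt_of_le hu (min_le_right _ _))
    calc |u - u₀| ^ β ≤ ((ε / (K + 1)) ^ (β⁻¹)) ^ β :=
          Real.rpow_le_rpow (abs_nonneg _) hle hβ0.le
    _ = ε / (K + 1) := by
        rw [← Real.rpow_mul (by positivity), inv_mul_cancel₀ (ne_of_gt hβ0), Real.rpow_one]
  calc |Phi d u - Phi d u₀| ≤ K * |u - u₀| ^ β := hK u u₀
  _ ≤ K * (ε / (K + 1)) := mul_le_mul_of_nonneg_left h1 hK0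
  _ = (K / (K + 1)) * ε := by ring
  _ < 1 * ε := by
      apply mul_lt_mul_of_pos_right _ hε
      rw [div_lt_one (by linarith)]
      linarith
  _ = ε := one_mul ε

lemma T_near_E (hd0 : d 0 = 0) (hd1 : d 1 = 1) (hde : ∀ n : ℕ, d (2 * n) = d n)
    (hdo : ∀ n : ℕ, d (2 * n + 1) = d n + d (n + 1)) :
    ∀ N : ℕ, 1 ≤ N →
      |(T d N : ℝ) - E d N| ≤ (2 * φ ^ 2 / (3 - φ)) * (N : ℝ) ^ (logb 2 φ) := by
  intro N hN
  have h3φ : (0:ℝ) < 3 - φ := by have := goldenRatio_lt_two; linarith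
  set L := Nat.log 2 N + 1 with hL
  have hNL : (N:ℝ) ≤ 2 ^ L := by
    exact_mod_cast (Nat.lt_pow_succ_log_self (by norm_num) N).le
  have hN0 : (0:ℝ) ≤ (N:ℝ) := Nat.cast_nonneg N
  have e1 := E_dist d hd0 hd1 hde hdo hN0 hNL 0
  rw [Real.dist_eq] at e1
  simp only [pow_zero, mul_one] at e1
  have hA0 : A d (N:ℝ) 0 = (T d N : ℝ) := by
    unfold A m
    simp
  rw [hA0] at e1
  have hφeq : ∀ k : ℕ, (φ:ℝ) ^ k = ((2:ℝ) ^ k) ^ (logb 2 φ) := by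
    intro k
    rw [← Real.rpow_natCast (2:ℝ) k, ← Real.rpow_mul (by norm_num), mul_comm,
      Real.rpow_mul (by norm_num), Real.rpow_logb (by norm_num) (by norm_num) goldenRatio_pos,
      Real.rpow_natCast]
  have h2k : ((2:ℝ) ^ (Nat.log 2 N)) ≤ (N:ℝ) := by
    exact_mod_cast Nat.pow_log_le_self 2 (by omega)
  have hlb0 : 0 ≤ logb 2 φ := Real.logb_nonneg (by norm_num) one_lt_goldenRatio.le
  have hgl : φ ^ L ≤ φ * (N:ℝ) ^ (logb 2 φ) := by
    have h1 : φ ^ (Nat.log 2 N) ≤ (N:ℝ) ^ (logb 2 φ) := by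
      rw [hφeq]
      exact Real.rpow_le_rpow (by positivity) h2k hlb0
    calc φ ^ L = φ * φ ^ (Nat.log 2 N) := by rw [hL, pow_succ]; ring
    _ ≤ φ * (N:ℝ) ^ (logb 2 φ) := mul_le_mul_of_nonneg_left h1 goldenRatio_pos.le
  have hX0 : 0 ≤ (N:ℝ) ^ (logb 2 φ) := Real.rpow_nonneg hN0 _
  have h2 : 2 * φ ^ L ≤ 2 * φ ^ 2 * ((N:ℝ) ^ (logb 2 φ)) := by
    nlinarith [one_lt_goldenRatio, goldenRatio_sq, hgl, hX0]
  calc |(T d N : ℝ) - E d N| ≤ 2 * φ ^ L / (3 - φ) := e1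
  _ ≤ 2 * φ ^ 2 * ((N:ℝ) ^ (logb 2 φ)) / (3 - φ) := by gcongr
  _ = (2 * φ ^ 2 / (3 - φ)) * (N : ℝ) ^ (logb 2 φ) := by ring

lemma E_eq_Phi (hd0 : d 0 = 0) (hd1 : d 1 = 1) (hde : ∀ n : ℕ, d (2 * n) = d n)
    (hdo : ∀ n : ℕ, d (2 * n + 1) = d n + d (n + 1)) {N : ℕ} (hN : 1 ≤ N) :
    (N:ℝ) ^ (logb 2 3) * Phi d (logb 2 N - ⌊logb 2 N⌋) = E d N := by
  have hNpos : (0:ℝ) < (N:ℝ) := by exact_mod_cast hN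
  rw [Phi_shift d hd0 hd1 hde hdo (logb 2 N) ⌊logb 2 N⌋]
  unfold Phi
  rw [Real.rpow_logb (by norm_num) (by norm_num) hNpos]
  have h3 : (N:ℝ) ^ (logb 2 3) * (3:ℝ) ^ (-(logb 2 (N:ℝ))) = 1 := by
    rw [Real.rpow_def_of_pos hNpos, Real.rpow_def_of_pos (by norm_num : (0:ℝ) < 3),
      ← Real.exp_add, Real.exp_eq_one_iff]
    unfold Real.logb
    ring
  calc (N:ℝ) ^ (logb 2 3) * (E d (N:ℝ) * (3:ℝ) ^ (-(logb 2 (N:ℝ))))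
      = E d (N:ℝ) * ((N:ℝ) ^ (logb 2 3) * (3:ℝ) ^ (-(logb 2 (N:ℝ)))) := by ring
  _ = E d (N:ℝ) := by rw [h3, mul_one]

end
end SternAux

open Real goldenRatio in
/-- **Theorem (asymptotics of the summatory function of Stern's diatomic
sequence).**

Let `d` be Stern's diatomic sequence (`d(0) = 0`, `d(1) = 1`, `d(2n) = d(n)`,
`d(2n+1) = d(n) + d(n+1)`), `κ = log₂ 3` and `φ = (1 + √5)/2`.  Then there is a
`1`-periodic continuous function `Φ : ℝ → ℝ`, Hölder continuous with every
exponent `α < κ − log₂ φ`, and a constant `c > 0` such that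
`|Σ_{0 ≤ n < N} d(n) − N^κ Φ({log₂ N})| ≤ c N^{log₂ φ}` for all `N ≥ 1`. -/
theorem stern_summatory_asymptotics
    (d : ℕ → ℕ) (hd0 : d 0 = 0) (hd1 : d 1 = 1)
    (hde : ∀ n : ℕ, d (2 * n) = d n)
    (hdo : ∀ n : ℕ, d (2 * n + 1) = d n + d (n + 1)) :
    ∃ Φ : ℝ → ℝ, Continuous Φ ∧ (∀ u : ℝ, Φ (u + 1) = Φ u) ∧
      (∀ α : ℝ, 0 < α →
        α < Real.logb 2 3 - Real.logb 2 ((1 + Real.sqrt 5) / 2) →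
        ∃ H : ℝ, ∀ x y : ℝ, |Φ x - Φ y| ≤ H * |x - y| ^ α) ∧
      ∃ c : ℝ, 0 < c ∧ ∀ N : ℕ, 1 ≤ N →
        |(∑ n ∈ Finset.range N, (d n : ℝ)) -
            (N : ℝ) ^ Real.logb 2 3 *
              Φ (Real.logb 2 N - ⌊Real.logb 2 N⌋)| ≤
          c * (N : ℝ) ^ Real.logb 2 ((1 + Real.sqrt 5) / 2) := by
  have h3φ : (0:ℝ) < 3 - φ := by have := goldenRatio_lt_two; linarith
  refine ⟨SternAux.Phi d, SternAux.Phi_continuous d hd0 hd1 hde hdo,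
    fun u => SternAux.Phi_periodic d hd0 hd1 hde hdo u, ?_, ?_⟩
  · intro α hα hαβ
    have hαβ' : α < logb 2 3 - logb 2 φ := hαβ
    obtain ⟨K, hK0, hK⟩ := SternAux.Phi_global_holder d hd0 hd1 hde hdo
    obtain ⟨M, hM0, hM, -⟩ := SternAux.Phi_bound_ex d hd0 hd1 hde hdo
    refine ⟨K + 2 * M, ?_⟩
    intro x y
    by_cases hxy : x = y
    · subst hxy
      simp [Real.zero_rpow (ne_of_gt hα)]
    · have ht0 : 0 < |x - y| := abs_pos.2 (sub_ne_zero.2 hxy)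
      have htα : (0:ℝ) ≤ |x - y| ^ α := Real.rpow_nonneg (abs_nonneg _) α
      rcases le_or_gt (|x - y|) 1 with h1 | h1
      · calc |SternAux.Phi d x - SternAux.Phi d y|
            ≤ K * |x - y| ^ (logb 2 3 - logb 2 φ) := hK x y
        _ ≤ K * |x - y| ^ α := by
            apply mul_le_mul_of_nonneg_left _ hK0
            exact Real.rpow_le_rpow_of_exponent_ge ht0 h1 (le_of_lt hαβ')
        _ ≤ (K + 2 * M) * |x - y| ^ α := by nlinarith
      · have h2M : |SternAux.Phi d x - SternAux.Phi d y| ≤ 2 * M := by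
          calc |SternAux.Phi d x - SternAux.Phi d y|
              ≤ |SternAux.Phi d x| + |SternAux.Phi d y| := abs_sub _ _
          _ ≤ M + M := add_le_add (hM x) (hM y)
          _ = 2 * M := by ring
        have hge1 : (1:ℝ) ≤ |x - y| ^ α := by
          calc (1:ℝ) = 1 ^ α := (Real.one_rpow α).symm
          _ ≤ |x - y| ^ α := Real.rpow_le_rpow (by norm_num) h1.le hα.le
        calc |SternAux.Phi d x - SternAux.Phi d y| ≤ 2 * M := h2M
        _ = 2 * M * 1 := by ring
        _ ≤ 2 * M * |x - y| ^ α := by nlinarith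
        _ ≤ (K + 2 * M) * |x - y| ^ α := by nlinarith
  · refine ⟨2 * φ ^ 2 / (3 - φ), by positivity, ?_⟩
    intro N hN
    have hsum : (∑ n ∈ Finset.range N, (d n : ℝ)) = ((SternAux.T d N : ℕ) : ℝ) := by
      rw [SternAux.T, Nat.cast_sum]
    rw [hsum]
    have hE := SternAux.E_eq_Phi d hd0 hd1 hde hdo hN
    rw [show (N : ℝ) ^ Real.logb 2 3 *
        SternAux.Phi d (Real.logb 2 N - ⌊Real.logb 2 N⌋) = SternAux.E d N from hE]
    exact SternAux.T_near_E d hd0 hd1 hde hdo N hN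
end

section
/- Let d be Stern's diatomic sequence. Set κ := log₂ 3. Then there exists a continuous function Φ : ℝ → ℝ with Φ(u+1) = Φ(u) for all u ∈ ℝ such that for every integer N ≥ 1 the exact identity Σ_{0≤n<N} d(n) + d(N)/2 = N^κ·Φ(log₂ N − ⌊log₂ N⌋) holds. -/
open scoped BigOperators

set_option linter.unusedSectionVars false

namespace SternAux

noncomputable section

def Dl (d : ℕ → ℕ) (n : ℕ) : ℝ := ((d n : ℝ) + (d (n + 1) : ℝ)) / 2

def Ss (d : ℕ → ℕ) (N : ℕ) : ℝ := ∑ n ∈ Finset.range N, Dl d n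

def clamp (y : ℝ) : ℝ := max 0 (min y 1)

def Tf (d : ℕ → ℕ) (M : ℕ) (x : ℝ) : ℝ :=
  ∑ n ∈ Finset.range M, Dl d n * clamp (x - (n : ℝ))

def PhiK (d : ℕ → ℕ) (k : ℕ) (u : ℝ) : ℝ :=
  (1 / 3 : ℝ) ^ k * Tf d (2 ^ (k + 2)) ((2 : ℝ) ^ (clamp u + (k : ℝ)))

def gK (d : ℕ → ℕ) (k : ℕ) (u : ℝ) : ℝ := PhiK d (k + 1) u - PhiK d k u

def Psi (d : ℕ → ℕ) (u : ℝ) : ℝ := PhiK d 0 u + ∑' k, gK d k u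

theorem continuous_clamp : Continuous clamp :=
  continuous_const.max (continuous_id.min continuous_const)

theorem clamp_nonneg (y : ℝ) : 0 ≤ clamp y := le_max_left _ _

theorem clamp_le_one (y : ℝ) : clamp y ≤ 1 :=
  max_le zero_le_one (min_le_right _ _)

theorem clamp_of_nonpos {y : ℝ} (h : y ≤ 0) : clamp y = 0 :=
  max_eq_left ((min_le_left _ _).trans h)

theorem clamp_of_one_le {y : ℝ} (h : 1 ≤ y) : clamp y = 1 := by
  rw [clamp, min_eq_right h, max_eq_right zero_le_one]

theorem clamp_of_mem {y : ℝ} (h0 : 0 ≤ y) (h1 : y ≤ 1) : clamp y = y := by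
  rw [clamp, min_eq_left h1, max_eq_right h0]

section

variable (d : ℕ → ℕ) (hd0 : d 0 = 0) (hd1 : d 1 = 1)
  (hde : ∀ n : ℕ, d (2 * n) = d n)
  (hdo : ∀ n : ℕ, d (2 * n + 1) = d n + d (n + 1))

include hd0 hd1 hde hdo

theorem d_le : ∀ n, d n ≤ n := by
  intro n
  induction n using Nat.strong_induction_on with
  | _ n ih =>
    match n with
    | 0 => simp [hd0]
    | 1 => simp [hd1]
    | (m + 2) =>
      rcases Nat.even_or_odd (m + 2) with ⟨j, hj⟩ | ⟨j, hj⟩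
      · have hj' : m + 2 = 2 * j := by omega
        rw [hj', hde]
        have := ih j (by omega)
        omega
      · have hj' : m + 2 = 2 * j + 1 := by omega
        rw [hj', hdo]
        have h1 := ih j (by omega)
        have h2 := ih (j + 1) (by omega)
        omega

theorem Ss_eq (N : ℕ) :
    Ss d N = (∑ n ∈ Finset.range N, (d n : ℝ)) + (d N : ℝ) / 2 := by
  have h : (∑ n ∈ Finset.range N, ((d (n + 1) : ℝ)))
      = (∑ n ∈ Finset.range N, (d n : ℝ)) + (d N : ℝ) := by
    have h1 := Finset.sum_range_succ' (fun n => (d n : ℝ)) N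
    have h2 := Finset.sum_range_succ (fun n => (d n : ℝ)) N
    simp only [hd0, Nat.cast_zero] at h1
    linarith [h1, h2]
  simp only [Ss, Dl]
  rw [← Finset.sum_div, Finset.sum_add_distrib, h]
  ring

theorem Ss_double (N : ℕ) : Ss d (2 * N) = 3 * Ss d N := by
  induction N with
  | zero => simp [Ss]
  | succ n ih =>
    have h1 : 2 * (n + 1) = (2 * n + 1) + 1 := by ring
    rw [h1, Ss, Finset.sum_range_succ, Finset.sum_range_succ, ← Ss, ih]
    have e1 : (d (2 * n) : ℝ) = (d n : ℝ) := by rw [hde]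
    have e2 : (d (2 * n + 1) : ℝ) = (d n : ℝ) + (d (n + 1) : ℝ) := by
      rw [hdo]; push_cast; ring
    have e3 : (d (2 * n + 1 + 1) : ℝ) = (d (n + 1) : ℝ) := by
      have : 2 * n + 1 + 1 = 2 * (n + 1) := by ring
      rw [this, hde]
    have hs : Ss d (n + 1) = Ss d n + Dl d n := by
      rw [Ss, Finset.sum_range_succ, ← Ss]
    rw [hs]
    simp only [Dl, e1, e2, e3]
    ring

theorem Ss_pow (N : ℕ) : ∀ j : ℕ, Ss d (N * 2 ^ j) = 3 ^ j * Ss d N := by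
  intro j
  induction j with
  | zero => simp
  | succ j ih =>
    have h1 : N * 2 ^ (j + 1) = 2 * (N * 2 ^ j) := by ring
    rw [h1, Ss_double d hd0 hd1 hde hdo, ih]
    ring

theorem Tf_eval (M N : ℕ) (x : ℝ) (h1 : (N : ℝ) ≤ x) (h2 : x ≤ (N : ℝ) + 1)
    (hM : N < M) :
    Tf d M x = Ss d N + Dl d N * (x - (N : ℝ)) := by
  rw [Tf, ← Finset.sum_range_add_sum_Ico _ (Nat.succ_le_of_lt hM)]
  have hz : ∀ n ∈ Finset.Ico (N + 1) M, Dl d n * clamp (x - (n : ℝ)) = 0 := by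
    intro n hn
    have hn' := (Finset.mem_Ico.mp hn).1
    have : x - (n : ℝ) ≤ 0 := by
      have : ((N : ℝ) + 1) ≤ (n : ℝ) := by exact_mod_cast hn'
      linarith
    rw [clamp_of_nonpos this, mul_zero]
  rw [Finset.sum_eq_zero hz, add_zero, Finset.sum_range_succ]
  have hcN : clamp (x - (N : ℝ)) = x - (N : ℝ) :=
    clamp_of_mem (by linarith) (by linarith)
  rw [hcN]
  congr 1
  rw [Ss]
  apply Finset.sum_congr rfl
  intro n hn
  have hn' := Finset.mem_range.mp hn
  have : (1 : ℝ) ≤ x - (n : ℝ) := by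
    have : (n : ℝ) + 1 ≤ (N : ℝ) := by exact_mod_cast hn'
    linarith
  rw [clamp_of_one_le this, mul_one]

theorem key (N : ℕ) (hN : 1 ≤ N) (x : ℝ) (h1 : (N : ℝ) ≤ x) (h2 : x ≤ (N : ℝ) + 1)
    (M M' : ℕ) (hM : N < M) (hM' : 2 * N + 1 < M') :
    |Tf d M' (2 * x) - 3 * Tf d M x| ≤ x := by
  have hTx := Tf_eval d hd0 hd1 hde hdo M N x h1 h2 hM
  have ha : (d N : ℝ) ≤ (N : ℝ) := by exact_mod_cast d_le d hd0 hd1 hde hdo N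
  have hb : (d (N + 1) : ℝ) ≤ (N : ℝ) + 1 := by exact_mod_cast d_le d hd0 hd1 hde hdo (N + 1)
  have ha0 : (0 : ℝ) ≤ (d N : ℝ) := Nat.cast_nonneg _
  have hb0 : (0 : ℝ) ≤ (d (N + 1) : ℝ) := Nat.cast_nonneg _
  have hN1 : (1 : ℝ) ≤ (N : ℝ) := by exact_mod_cast hN
  have e1 : (d (2 * N) : ℝ) = (d N : ℝ) := by rw [hde]
  have e2 : (d (2 * N + 1) : ℝ) = (d N : ℝ) + (d (N + 1) : ℝ) := by rw [hdo]; push_cast; ring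
  have e3 : (d (2 * N + 1 + 1) : ℝ) = (d (N + 1) : ℝ) := by
    have h : 2 * N + 1 + 1 = 2 * (N + 1) := by ring
    rw [h, hde]
  rcases le_or_gt (2 * x) (2 * (N : ℝ) + 1) with hc | hc
  · have hT2 := Tf_eval d hd0 hd1 hde hdo M' (2 * N) (2 * x)
      (by push_cast; linarith) (by push_cast; linarith) (by omega)
    rw [hT2, hTx, Ss_double d hd0 hd1 hde hdo N]
    simp only [Dl, e1, e2]
    push_cast
    have ht0 : (0 : ℝ) ≤ x - N := by linarith
    have ht1 : x - (N : ℝ) ≤ 1 / 2 := by linarith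
    have p1 : (x - N) * (d N : ℝ) ≤ (1 / 2) * ((N : ℝ) + 1) :=
      mul_le_mul ht1 (by linarith) ha0 (by norm_num)
    have p2 : (x - N) * (d (N + 1) : ℝ) ≤ (1 / 2) * ((N : ℝ) + 1) :=
      mul_le_mul ht1 hb hb0 (by norm_num)
    have p3 : (0 : ℝ) ≤ (x - N) * (d N : ℝ) := mul_nonneg ht0 ha0
    have p4 : (0 : ℝ) ≤ (x - N) * (d (N + 1) : ℝ) := mul_nonneg ht0 hb0
    rw [abs_le]
    constructor <;> linarith [p1, p2, p3, p4]
  · have hT2 := Tf_eval d hd0 hd1 hde hdo M' (2 * N + 1) (2 * x)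
      (by push_cast; linarith) (by push_cast; linarith) hM'
    have hS1 : Ss d (2 * N + 1) = 3 * Ss d N + Dl d (2 * N) := by
      rw [Ss, Finset.sum_range_succ, ← Ss, Ss_double d hd0 hd1 hde hdo N]
    rw [hT2, hTx, hS1]
    simp only [Dl, e1, e2, e3]
    push_cast
    have ht0 : (0 : ℝ) ≤ (N : ℝ) + 1 - x := by linarith
    have ht1 : (N : ℝ) + 1 - x ≤ 1 / 2 := by linarith
    have p1 : ((N : ℝ) + 1 - x) * (d N : ℝ) ≤ (1 / 2) * ((N : ℝ) + 1) :=
      mul_le_mul ht1 (by linarith) ha0 (by norm_num)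
    have p2 : ((N : ℝ) + 1 - x) * (d (N + 1) : ℝ) ≤ (1 / 2) * ((N : ℝ) + 1) :=
      mul_le_mul ht1 hb hb0 (by norm_num)
    have p3 : (0 : ℝ) ≤ ((N : ℝ) + 1 - x) * (d N : ℝ) := mul_nonneg ht0 ha0
    have p4 : (0 : ℝ) ≤ ((N : ℝ) + 1 - x) * (d (N + 1) : ℝ) := mul_nonneg ht0 hb0
    rw [abs_le]
    constructor <;> linarith [p1, p2, p3, p4]

end


theorem continuous_phiK (d : ℕ → ℕ) (k : ℕ) : Continuous (PhiK d k) := by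
  unfold PhiK Tf
  refine continuous_const.mul (continuous_finset_sum _ fun n _ => continuous_const.mul ?_)
  refine continuous_clamp.comp (Continuous.sub ?_ continuous_const)
  exact Continuous.rpow continuous_const (continuous_clamp.add continuous_const)
    (fun _ => Or.inl (by norm_num))

theorem continuous_gK (d : ℕ → ℕ) (k : ℕ) : Continuous (gK d k) :=
  (continuous_phiK d (k + 1)).sub (continuous_phiK d k)

theorem psi_eval (d : ℕ → ℕ) (u : ℝ) (m : ℕ) (C : ℝ)
    (h : ∀ k, m ≤ k → PhiK d k u = C) : Psi d u = C := by
  have hz : ∀ k ∉ Finset.range m, gK d k u = 0 := by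
    intro k hk
    have hmk : m ≤ k := Nat.le_of_not_lt (fun h' => hk (Finset.mem_range.mpr h'))
    rw [gK, h k hmk, h (k + 1) (hmk.trans (Nat.le_succ k)), sub_self]
  have ht : ∑ k ∈ Finset.range m, gK d k u = PhiK d m u - PhiK d 0 u := by
    simpa only [gK] using Finset.sum_range_sub (fun k => PhiK d k u) m
  rw [Psi, tsum_eq_sum hz, ht, h m le_rfl]
  ring

section

variable (d : ℕ → ℕ) (hd0 : d 0 = 0) (hd1 : d 1 = 1)
  (hde : ∀ n : ℕ, d (2 * n) = d n)
  (hdo : ∀ n : ℕ, d (2 * n + 1) = d n + d (n + 1))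

include hd0 hd1 hde hdo

theorem gK_bound (k : ℕ) (u : ℝ) : |gK d k u| ≤ (2 / 3 : ℝ) ^ k := by
  have hc0 : 0 ≤ clamp u := clamp_nonneg u
  have hc1 : clamp u ≤ 1 := clamp_le_one u
  set x := (2 : ℝ) ^ (clamp u + (k : ℝ)) with hxdef
  have hx2 : (2 : ℝ) ^ (clamp u + ((k : ℝ) + 1)) = 2 * x := by
    rw [hxdef, show clamp u + ((k : ℝ) + 1) = (clamp u + (k : ℝ)) + 1 by ring,
      Real.rpow_add (by norm_num), Real.rpow_one]
    ring
  have hxlb : (1 : ℝ) ≤ x := Real.one_le_rpow (by norm_num) (by positivity)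
  have hpow : ((2 ^ (k + 1) : ℕ) : ℝ) = (2 : ℝ) ^ ((k : ℝ) + 1) := by
    have h1 : ((2 ^ (k + 1) : ℕ) : ℝ) = (2 : ℝ) ^ (k + 1) := by push_cast; ring
    rw [h1, ← Real.rpow_natCast (2 : ℝ) (k + 1)]
    push_cast
    ring_nf
  have hxub : x ≤ ((2 ^ (k + 1) : ℕ) : ℝ) := by
    rw [hpow]
    exact Real.rpow_le_rpow_of_exponent_le (by norm_num) (by linarith)
  set N := ⌊x⌋₊ with hNdef
  have hNle : (N : ℝ) ≤ x := Nat.floor_le (by linarith)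
  have hNlt : x < (N : ℝ) + 1 := Nat.lt_floor_add_one x
  have hN1 : 1 ≤ N := Nat.le_floor (by exact_mod_cast hxlb)
  have hNub : N ≤ 2 ^ (k + 1) := by
    calc N ≤ ⌊((2 ^ (k + 1) : ℕ) : ℝ)⌋₊ := Nat.floor_le_floor hxub
      _ = 2 ^ (k + 1) := Nat.floor_natCast _
  have e1 : (2 : ℕ) ^ (k + 2) = 2 * 2 ^ (k + 1) := by ring
  have e2 : (2 : ℕ) ^ (k + 3) = 2 * 2 ^ (k + 2) := by ring
  have e3 : (1 : ℕ) ≤ 2 ^ (k + 1) := Nat.one_le_two_pow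
  have hkey := key d hd0 hd1 hde hdo N hN1 x hNle hNlt.le (2 ^ (k + 2)) (2 ^ (k + 3))
    (by omega) (by omega)
  have hg : gK d k u = (1 / 3 : ℝ) ^ (k + 1) *
      (Tf d (2 ^ (k + 3)) (2 * x) - 3 * Tf d (2 ^ (k + 2)) x) := by
    rw [gK, PhiK, PhiK]
    push_cast
    rw [hx2, ← hxdef, show k + 1 + 2 = k + 3 from rfl]
    ring
  rw [hg, abs_mul, abs_of_nonneg (by positivity : (0 : ℝ) ≤ (1 / 3 : ℝ) ^ (k + 1))]
  calc (1 / 3 : ℝ) ^ (k + 1) * |Tf d (2 ^ (k + 3)) (2 * x) - 3 * Tf d (2 ^ (k + 2)) x|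
      ≤ (1 / 3 : ℝ) ^ (k + 1) * x := by
        exact mul_le_mul_of_nonneg_left hkey (by positivity)
    _ ≤ (1 / 3 : ℝ) ^ (k + 1) * ((2 ^ (k + 1) : ℕ) : ℝ) := by
        exact mul_le_mul_of_nonneg_left hxub (by positivity)
    _ = (2 / 3 : ℝ) ^ (k + 1) := by
        rw [Nat.cast_pow]
        push_cast
        rw [← mul_pow]
        norm_num
    _ ≤ (2 / 3 : ℝ) ^ k := pow_le_pow_of_le_one (by norm_num) (by norm_num) (Nat.le_succ k)

theorem continuous_psi : Continuous (Psi d) := by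
  refine (continuous_phiK d 0).add ?_
  refine continuous_tsum (continuous_gK d)
    (summable_geometric_of_lt_one (r := (2/3:ℝ)) (by norm_num) (by norm_num)) (fun k u => ?_)
  rw [Real.norm_eq_abs]
  exact gK_bound d hd0 hd1 hde hdo k u

theorem phiK_nat (k A : ℕ) (hA : A ≤ 2 ^ (k + 1)) (u : ℝ)
    (hx : (2 : ℝ) ^ (clamp u + (k : ℝ)) = (A : ℝ)) :
    PhiK d k u = (1 / 3 : ℝ) ^ k * Ss d A := by
  have hlt : A < 2 ^ (k + 2) :=
    lt_of_le_of_lt hA (Nat.pow_lt_pow_right one_lt_two (by omega))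
  rw [PhiK, hx, Tf_eval d hd0 hd1 hde hdo (2 ^ (k + 2)) A (A : ℝ) le_rfl (by linarith) hlt]
  simp

end


end

end SternAux

/-- **Corollary (exact formula for Stern's diatomic sequence).**

Let `d` be Stern's diatomic sequence (`d(0) = 0`, `d(1) = 1`, `d(2n) = d(n)`,
`d(2n+1) = d(n) + d(n+1)`) and `κ = log₂ 3`.  Then there is a `1`-periodic
continuous function `Φ : ℝ → ℝ` such that
`Σ_{0 ≤ n < N} d(n) + d(N)/2 = N^κ Φ({log₂ N})` for every integer `N ≥ 1`. -/
theorem stern_summatory_exact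
    (d : ℕ → ℕ) (hd0 : d 0 = 0) (hd1 : d 1 = 1)
    (hde : ∀ n : ℕ, d (2 * n) = d n)
    (hdo : ∀ n : ℕ, d (2 * n + 1) = d n + d (n + 1)) :
    ∃ Φ : ℝ → ℝ, Continuous Φ ∧ (∀ u : ℝ, Φ (u + 1) = Φ u) ∧
      ∀ N : ℕ, 1 ≤ N →
        (∑ n ∈ Finset.range N, (d n : ℝ)) + (d N : ℝ) / 2 =
          (N : ℝ) ^ Real.logb 2 3 * Φ (Real.logb 2 N - ⌊Real.logb 2 N⌋) := by
  classical
  set f : ℝ → ℝ := fun w => SternAux.Psi d w * (3 : ℝ) ^ (-w) with hf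
  have hcontf : Continuous f := by
    refine (SternAux.continuous_psi d hd0 hd1 hde hdo).mul ?_
    exact Continuous.rpow continuous_const continuous_neg (fun _ => Or.inl (by norm_num))
  -- PhiK at u = 0
  have hclamp0 : SternAux.clamp (0 : ℝ) = 0 := SternAux.clamp_of_mem le_rfl zero_le_one
  have hclamp1 : SternAux.clamp (1 : ℝ) = 1 := SternAux.clamp_of_mem zero_le_one le_rfl
  have hpowk : ∀ k : ℕ, (2 : ℝ) ^ ((k : ℕ) : ℝ) = ((2 ^ k : ℕ) : ℝ) := by
    intro k
    rw [Real.rpow_natCast]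
    push_cast
    ring
  have hpsi0 : SternAux.Psi d 0 = SternAux.Ss d 1 := by
    refine SternAux.psi_eval d 0 0 _ (fun k _ => ?_)
    have hx : (2 : ℝ) ^ (SternAux.clamp (0 : ℝ) + (k : ℝ)) = ((2 ^ k : ℕ) : ℝ) := by
      rw [hclamp0, zero_add, hpowk]
    have h1 : (2 : ℕ) ^ k ≤ 2 ^ (k + 1) := Nat.pow_le_pow_right (by norm_num) (Nat.le_succ k)
    rw [SternAux.phiK_nat d hd0 hd1 hde hdo k (2 ^ k) h1 0 hx]
    have h2 : (2 : ℕ) ^ k = 1 * 2 ^ k := (one_mul _).symm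
    rw [h2, SternAux.Ss_pow d hd0 hd1 hde hdo 1 k]
    have h3 : (1 / 3 : ℝ) ^ k * 3 ^ k = 1 := by rw [← mul_pow]; norm_num
    rw [← mul_assoc, h3, one_mul]
  have hpsi1 : SternAux.Psi d 1 = 3 * SternAux.Ss d 1 := by
    refine SternAux.psi_eval d 1 0 _ (fun k _ => ?_)
    have hx : (2 : ℝ) ^ (SternAux.clamp (1 : ℝ) + (k : ℝ)) = ((2 ^ (k + 1) : ℕ) : ℝ) := by
      rw [hclamp1, show (1 : ℝ) + (k : ℝ) = ((k + 1 : ℕ) : ℝ) by push_cast; ring, hpowk]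
    rw [SternAux.phiK_nat d hd0 hd1 hde hdo k (2 ^ (k + 1)) le_rfl 1 hx]
    have h2 : (2 : ℕ) ^ (k + 1) = 1 * 2 ^ (k + 1) := (one_mul _).symm
    rw [h2, SternAux.Ss_pow d hd0 hd1 hde hdo 1 (k + 1)]
    have h3 : (1 / 3 : ℝ) ^ k * 3 ^ (k + 1) = 3 := by
      rw [pow_succ, ← mul_assoc, ← mul_pow]
      norm_num
    rw [← mul_assoc, h3]
  have hf01 : f 0 = f 1 := by
    rw [hf]
    simp only [hpsi0, hpsi1, neg_zero, Real.rpow_zero, mul_one]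
    rw [show (-1 : ℝ) = ((-1 : ℤ) : ℝ) by norm_num, Real.rpow_intCast]
    norm_num
    ring
  refine ⟨fun v => f (Int.fract v), ?_, ?_, ?_⟩
  · exact ContinuousOn.comp_fract'' hcontf.continuousOn hf01
  · intro u
    simp only [Int.fract_add_one]
  · intro N hN
    have hNpos : (0 : ℝ) < (N : ℝ) := by exact_mod_cast hN
    set L := Real.logb 2 (N : ℝ) with hL
    have hL0 : 0 ≤ L := Real.logb_nonneg (by norm_num) (by exact_mod_cast hN)
    set m : ℕ := (⌊L⌋).toNat with hm
    have hmR : (m : ℝ) = ((⌊L⌋ : ℤ) : ℝ) := by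
      have := Int.toNat_of_nonneg (Int.floor_nonneg.mpr hL0)
      exact_mod_cast congrArg (Int.cast : ℤ → ℝ) this
    set u := Int.fract L with hu
    have hu0 : 0 ≤ u := Int.fract_nonneg L
    have hu1 : u < 1 := Int.fract_lt_one L
    have huL : u = L - (m : ℝ) := by rw [hu, Int.fract, hmR]
    have hclampu : SternAux.clamp u = u := SternAux.clamp_of_mem hu0 hu1.le
    -- Psi at u
    have hpsiu : SternAux.Psi d u = (1 / 3 : ℝ) ^ m * SternAux.Ss d N := by
      refine SternAux.psi_eval d u m _ (fun k hk => ?_)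
      have hA : (2 : ℝ) ^ (SternAux.clamp u + (k : ℝ)) = ((N * 2 ^ (k - m) : ℕ) : ℝ) := by
        rw [hclampu, huL]
        rw [show L - (m : ℝ) + (k : ℝ) = L + (((k - m : ℕ) : ℕ) : ℝ) by
          push_cast [Nat.cast_sub hk]; ring]
        rw [Real.rpow_add (by norm_num), Real.rpow_logb (by norm_num) (by norm_num) hNpos,
          hpowk]
        push_cast
        ring
      have hAub : (N * 2 ^ (k - m) : ℕ) ≤ 2 ^ (k + 1) := by
        have h1 : ((N * 2 ^ (k - m) : ℕ) : ℝ) ≤ ((2 ^ (k + 1) : ℕ) : ℝ) := by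
          rw [← hA, ← hpowk (k + 1)]
          refine Real.rpow_le_rpow_of_exponent_le (by norm_num) ?_
          rw [hclampu]
          push_cast
          linarith
        exact_mod_cast h1
      rw [SternAux.phiK_nat d hd0 hd1 hde hdo k (N * 2 ^ (k - m)) hAub u hA,
        SternAux.Ss_pow d hd0 hd1 hde hdo N (k - m)]
      have h3 : (1 / 3 : ℝ) ^ k * 3 ^ (k - m) = (1 / 3 : ℝ) ^ m := by
        have hsplit : (3 : ℝ) ^ k = 3 ^ (k - m) * 3 ^ m := by
          rw [← pow_add]
          congr 1
          omega
        simp only [one_div, inv_pow]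
        rw [hsplit, mul_inv]
        field_simp
      rw [← mul_assoc, h3]
    -- assemble
    have hfract : Int.fract (L - ((⌊L⌋ : ℤ) : ℝ)) = u := by
      rw [Int.fract_sub_intCast, hu]
    show (∑ n ∈ Finset.range N, (d n : ℝ)) + (d N : ℝ) / 2 =
      (N : ℝ) ^ Real.logb 2 3 * f (Int.fract (L - ((⌊L⌋ : ℤ) : ℝ)))
    rw [hfract, ← SternAux.Ss_eq d hd0 hd1 hde hdo N, hf]
    simp only
    rw [hpsiu]
    -- N ^ logb 2 3 = 3 ^ L
    have hNL : (N : ℝ) = (2 : ℝ) ^ L := (Real.rpow_logb (by norm_num) (by norm_num) hNpos).symm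
    have h3L : (3 : ℝ) = (2 : ℝ) ^ Real.logb 2 3 :=
      (Real.rpow_logb (by norm_num) (by norm_num) (by norm_num)).symm
    have hkey : (N : ℝ) ^ Real.logb 2 3 = (3 : ℝ) ^ L := by
      rw [hNL]
      nth_rewrite 2 [h3L]
      rw [← Real.rpow_mul (by norm_num), ← Real.rpow_mul (by norm_num), mul_comm]
    have hLmu : L = (m : ℝ) + u := by rw [huL]; ring
    have h3split : (3 : ℝ) ^ L = (3 : ℝ) ^ (m : ℕ) * (3 : ℝ) ^ u := by
      rw [hLmu, Real.rpow_add (by norm_num), Real.rpow_natCast]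
    have h3u : (3 : ℝ) ^ u * (3 : ℝ) ^ (-u) = 1 := by
      rw [← Real.rpow_add (by norm_num)]
      simp
    have h3m : (3 : ℝ) ^ (m : ℕ) * (1 / 3 : ℝ) ^ m = 1 := by
      rw [← mul_pow]
      norm_num
    rw [hkey, h3split]
    calc SternAux.Ss d N
        = ((3 : ℝ) ^ u * (3 : ℝ) ^ (-u)) * (((3 : ℝ) ^ (m : ℕ) * (1 / 3 : ℝ) ^ m) *
            SternAux.Ss d N) := by rw [h3u, h3m]; ring
      _ = (3 : ℝ) ^ (m : ℕ) * (3 : ℝ) ^ u * ((1 / 3 : ℝ) ^ m * SternAux.Ss d N *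
            (3 : ℝ) ^ (-u)) := by ring
end

section
/- Let z(n) denote the number of non-zero entries in row n of the generalized Pascal's triangle, i.e., z(n) := #{0 ≤ k ≤ n : binom((n)₂, (k)₂) ≠ 0}, and let d be Stern's diatomic sequence. Set κ := log₂ 3. Then there exists a continuous function Φ : ℝ → ℝ with Φ(u+1) = Φ(u) for all u ∈ ℝ such that for every integer N ≥ 1 both exact identities hold: Σ_{0≤n<N} z(n) = N^κ·Φ(log₂ N − ⌊log₂ N⌋), and Σ_{0≤n<N} d(n) + d(N)/2 = (1/2)·N^κ·Φ(log₂ N − ⌊log₂ N⌋) (that is, Φ_Z = 2Φ_D). -/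
open scoped BigOperators

/-- The binomial coefficient `binom(u, v)` of two words: the number of
occurrences of `v` as a scattered subword of `u`, i.e., the number of strictly
increasing maps `π` selecting positions of `u` at which the letters of `v`
appear in order. -/
def wordBinom : List Bool → List Bool → ℕ
  | _, [] => 1
  | [], _ :: _ => 0
  | a :: u, b :: v => wordBinom u (b :: v) + if a = b then wordBinom u v else 0

/-- `genPascalRow n` is the number of non-zero entries in row `n` of the
generalized Pascal's triangle `𝒫₂`, i.e., the number of `0 ≤ k ≤ n` such that
the word binomial coefficient `binom((n)₂, (k)₂)` of the binary expansions of
`n` and `k` is non-zero.  (Binary expansions are taken as lists of bits via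
`Nat.bits`; reversing both words gives a bijection on occurrences, so the
count is independent of the orientation of the expansions.) -/
def genPascalRow (n : ℕ) : ℕ :=
  ((Finset.range (n + 1)).filter fun k => wordBinom (Nat.bits n) (Nat.bits k) ≠ 0).card


open scoped List
open Filter Topology


def stern : ℕ → ℕ
  | 0 => 0
  | 1 => 1
  | n + 2 =>
    if (n + 2) % 2 = 0 then stern ((n + 2) / 2)
    else stern ((n + 2) / 2) + stern ((n + 2) / 2 + 1)
decreasing_by all_goals omega

lemma stern_zero : stern 0 = 0 := by rw [stern]
lemma stern_one : stern 1 = 1 := by rw [stern]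

lemma stern_two_mul (n : ℕ) : stern (2 * n) = stern n := by
  match n with
  | 0 => rw [show 2*0 = 0 from rfl]
  | m + 1 =>
    have h : 2 * (m + 1) = m + m + 2 := by ring
    rw [h, stern]
    have h2 : (m + m + 2) % 2 = 0 := by omega
    simp only [h2, if_pos, if_true]
    congr 1
    omega

lemma stern_two_mul_add_one (n : ℕ) : stern (2 * n + 1) = stern n + stern (n + 1) := by
  match n with
  | 0 => norm_num [stern_one, stern_zero]
  | m + 1 =>
    have h : 2 * (m + 1) + 1 = (2 * m + 1) + 2 := by ring
    rw [h, stern]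
    have h2 : ¬((2 * m + 1 + 2) % 2 = 0) := by omega
    simp only [h2, if_false]
    congr 2 <;> omega

lemma stern_le (n : ℕ) : stern n ≤ n := by
  induction n using Nat.strong_induction_on with
  | _ n ih =>
    match n with
    | 0 => simp [stern_zero]
    | 1 => simp [stern_one]
    | m + 2 =>
      rcases Nat.even_or_odd (m + 2) with ⟨k, hk⟩ | ⟨k, hk⟩
      · rw [hk, ← two_mul, stern_two_mul]
        have := ih k (by omega)
        omega
      · rw [hk, stern_two_mul_add_one]
        have h1 := ih k (by omega)
        have h2 := ih (k + 1) (by omega)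
        omega

lemma d_eq_stern (d : ℕ → ℕ) (hd0 : d 0 = 0) (hd1 : d 1 = 1)
    (hde : ∀ n : ℕ, d (2 * n) = d n)
    (hdo : ∀ n : ℕ, d (2 * n + 1) = d n + d (n + 1)) : ∀ n, d n = stern n := by
  intro n
  induction n using Nat.strong_induction_on with
  | _ n ih =>
    match n with
    | 0 => rw [hd0, stern_zero]
    | 1 => rw [hd1, stern_one]
    | m + 2 =>
      rcases Nat.even_or_odd (m + 2) with ⟨k, hk⟩ | ⟨k, hk⟩
      · rw [hk, ← two_mul, hde, stern_two_mul, ih k (by omega)]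
      · rw [hk, hdo, stern_two_mul_add_one, ih k (by omega), ih (k + 1) (by omega)]

def Tn (N : ℕ) : ℕ := 2 * (∑ n ∈ Finset.range N, stern n) + stern N

lemma Tn_zero : Tn 0 = 0 := by simp [Tn, stern_zero]

lemma Tn_succ (N : ℕ) : Tn (N + 1) = Tn N + (stern N + stern (N + 1)) := by
  simp only [Tn, Finset.sum_range_succ]; ring

lemma sum_stern_two_mul (N : ℕ) :
    (∑ n ∈ Finset.range (2 * N), stern n) =
      3 * (∑ n ∈ Finset.range N, stern n) + stern N := by
  induction N with
  | zero => simp [stern_zero]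
  | succ m ih =>
    have h : 2 * (m + 1) = 2 * m + 1 + 1 := by ring
    rw [h, Finset.sum_range_succ, Finset.sum_range_succ, ih, Finset.sum_range_succ,
      stern_two_mul, stern_two_mul_add_one]
    ring

lemma Tn_double (N : ℕ) : Tn (2 * N) = 3 * Tn N := by
  rw [Tn, Tn, sum_stern_two_mul, stern_two_mul]; ring

lemma Tn_pow (k N : ℕ) : Tn (2 ^ k * N) = 3 ^ k * Tn N := by
  induction k with
  | zero => simp
  | succ j ih =>
    have h : 2 ^ (j + 1) * N = 2 * (2 ^ j * N) := by ring
    rw [h, Tn_double, ih]; ring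

lemma cons_sublist_cons_iff' {a b : Bool} {u v : List Bool} :
    b :: v <+ a :: u ↔ (b :: v <+ u ∨ (a = b ∧ v <+ u)) := by
  constructor
  · intro h
    cases h with
    | cons _ h => exact Or.inl h
    | cons_cons _ h => exact Or.inr ⟨rfl, h⟩
  · rintro (h | ⟨rfl, h⟩)
    · exact h.cons _
    · exact h.cons₂ _

lemma wordBinom_ne_zero (u v : List Bool) : wordBinom u v ≠ 0 ↔ v <+ u := by
  induction u generalizing v with
  | nil =>
    cases v with
    | nil => simp [wordBinom]
    | cons b v => simp [wordBinom]
  | cons a u ih =>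
    cases v with
    | nil => simp [wordBinom]
    | cons b v =>
      have h1 := ih (b :: v)
      have h2 := ih v
      show wordBinom u (b :: v) + (if a = b then wordBinom u v else 0) ≠ 0 ↔ _
      rw [cons_sublist_cons_iff']
      by_cases hab : a = b
      · rw [if_pos hab]
        constructor
        · intro h
          rcases Nat.eq_zero_or_pos (wordBinom u (b :: v)) with h0 | hp
          · exact Or.inr ⟨hab, h2.mp (by omega)⟩
          · exact Or.inl (h1.mp (by omega))
        · rintro (hs | ⟨-, hs⟩)
          · have := h1.mpr hs
            omega
          · have := h2.mpr hs
            omega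
      · rw [if_neg hab, Nat.add_zero]
        constructor
        · intro h
          exact Or.inl (h1.mp h)
        · rintro (hs | ⟨hab', -⟩)
          · exact h1.mpr hs
          · exact absurd hab' hab

def SL (p : List Bool) : Finset (List Bool) := p.sublists.toFinset

lemma mem_SL {w p : List Bool} : w ∈ SL p ↔ w <+ p := by
  simp [SL, List.mem_sublists]

def Xc (p : List Bool) (b : Bool) : ℕ :=
  ((SL p).filter (fun w => w.getLast? = some b)).card

lemma filter_concat_eq (p : List Bool) (b : Bool) :
    (SL (p ++ [b])).filter (fun w => w.getLast? = some b) = (SL p).image (· ++ [b]) := by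
  ext w
  simp only [Finset.mem_filter, mem_SL, Finset.mem_image]
  constructor
  · rintro ⟨hsub, hlast⟩
    rcases List.sublist_append_iff.mp hsub with ⟨r₁, r₂, rfl, h₁, h₂⟩
    rcases List.sublist_singleton.mp h₂ with rfl | rfl
    · rw [List.append_nil] at hlast ⊢
      have hne : r₁ ≠ [] := by rintro rfl; simp at hlast
      refine ⟨r₁.dropLast, (List.dropLast_sublist r₁).trans h₁, ?_⟩
      have hg := List.getLast?_eq_getLast hne
      rw [hg] at hlast
      have : r₁.getLast hne = b := Option.some.inj hlast
      rw [← this]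
      exact List.dropLast_append_getLast hne
    · exact ⟨r₁, h₁, rfl⟩
  · rintro ⟨s, hs, rfl⟩
    exact ⟨hs.append (List.Sublist.refl [b]), List.getLast?_concat⟩

lemma filter_concat_ne (p : List Bool) (b c : Bool) (hbc : c ≠ b) :
    (SL (p ++ [b])).filter (fun w => w.getLast? = some c) =
      (SL p).filter (fun w => w.getLast? = some c) := by
  ext w
  simp only [Finset.mem_filter, mem_SL]
  constructor
  · rintro ⟨hsub, hlast⟩
    refine ⟨?_, hlast⟩
    rcases List.sublist_append_iff.mp hsub with ⟨r₁, r₂, rfl, h₁, h₂⟩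
    rcases List.sublist_singleton.mp h₂ with rfl | rfl
    · simpa using h₁
    · rw [List.getLast?_concat] at hlast
      injection hlast with hh
      exact absurd hh.symm hbc
  · rintro ⟨hsub, hlast⟩
    exact ⟨hsub.trans (List.sublist_append_left _ _), hlast⟩

lemma card_SL (p : List Bool) : (SL p).card = 1 + Xc p false + Xc p true := by
  classical
  have h1 := Finset.card_filter_add_card_filter_not
    (s := SL p) (p := fun w => w.getLast? = some true)
  have h2 := Finset.card_filter_add_card_filter_not
    (s := (SL p).filter (fun w => ¬ w.getLast? = some true))
    (p := fun w => w.getLast? = some false)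
  rw [Finset.filter_filter, Finset.filter_filter] at h2
  have e1 : (SL p).filter (fun w => ¬ w.getLast? = some true ∧ w.getLast? = some false) =
      (SL p).filter (fun w => w.getLast? = some false) := by
    apply Finset.filter_congr
    intro w _
    constructor
    · rintro ⟨-, h⟩; exact h
    · intro h; exact ⟨by simp [h], h⟩
  have e2 : (SL p).filter (fun w => ¬ w.getLast? = some true ∧ ¬ w.getLast? = some false) =
      {([] : List Bool)} := by
    ext w
    simp only [Finset.mem_filter, mem_SL, Finset.mem_singleton]
    constructor
    · rintro ⟨-, h⟩
      rcases hl : w.getLast? with - | c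
      · exact List.getLast?_eq_none_iff.mp hl
      · cases c
        · exact absurd hl h.2
        · exact absurd hl h.1
    · rintro rfl
      exact ⟨List.nil_sublist p, by simp, by simp⟩
  rw [e1, e2] at h2
  simp only [Finset.card_singleton] at h2
  unfold Xc
  omega

def pstep : ℕ × ℕ → Bool → ℕ × ℕ
  | (x, y), true => (x, x + y)
  | (x, y), false => (x + y, y)

def qstep : Bool → ℕ × ℕ → ℕ × ℕ
  | false, (x, y) => (x, x + y)
  | true, (x, y) => (x + y, y)

lemma card_valid (p : List Bool) :
    ((SL p).filter (fun w => w.getLast? ≠ some false)).card = 1 + Xc p true := by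
  classical
  have h1 := Finset.card_filter_add_card_filter_not
    (s := SL p) (p := fun w => w.getLast? = some false)
  have hcs := card_SL p
  have he : (SL p).filter (fun w => w.getLast? ≠ some false) =
      (SL p).filter (fun w => ¬ w.getLast? = some false) := rfl
  rw [he]
  unfold Xc at *
  omega

lemma foldl_pstep (p : List Bool) :
    List.foldl pstep (1, 1) p = (1 + Xc p false, 1 + Xc p true) := by
  induction p using List.reverseRecOn with
  | nil =>
    have hx : ∀ c : Bool, Xc [] c = 0 := by
      intro c
      unfold Xc
      apply Finset.card_eq_zero.mpr
      ext w
      simp only [Finset.mem_filter, mem_SL, List.sublist_nil, Finset.notMem_empty,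
        iff_false, not_and]
      rintro rfl
      simp
    simp [hx]
  | append_singleton q b ih =>
    rw [List.foldl_append, ih]
    have hcard : ∀ c : Bool, Xc (q ++ [c]) c = (SL q).card := by
      intro c
      unfold Xc
      rw [filter_concat_eq]
      exact Finset.card_image_of_injective _ (List.append_left_injective _)
    cases b
    · have h2 : Xc (q ++ [false]) true = Xc q true := by
        unfold Xc; rw [filter_concat_ne q false true (by simp)]
      have h3 := hcard false
      rw [card_SL q] at h3
      show pstep (1 + Xc q false, 1 + Xc q true) false = _
      rw [pstep, h2, h3]
      exact Prod.ext (by omega) (by omega)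
    · have h2 : Xc (q ++ [true]) false = Xc q false := by
        unfold Xc; rw [filter_concat_ne q true false (by simp)]
      have h3 := hcard true
      rw [card_SL q] at h3
      show pstep (1 + Xc q false, 1 + Xc q true) true = _
      rw [pstep, h2, h3]
      exact Prod.ext (by omega) (by omega)

lemma bits_ne_nil {n : ℕ} (h : n ≠ 0) : Nat.bits n ≠ [] := by
  intro hnil
  have hlen := Nat.size_eq_bits_len n
  rw [hnil] at hlen
  have hp := Nat.size_pos.mpr (Nat.pos_of_ne_zero h)
  simp at hlen
  omega

lemma bits_getLast? (n : ℕ) : (Nat.bits n).getLast? ≠ some false := by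
  induction n using Nat.strong_induction_on with
  | _ n ih =>
    match n with
    | 0 => simp [Nat.zero_bits]
    | m + 1 =>
      rcases Nat.even_or_odd (m + 1) with ⟨k, hk⟩ | ⟨k, hk⟩
      · have hk0 : k ≠ 0 := by omega
        rw [hk, ← two_mul, Nat.bit0_bits _ hk0]
        have hne := bits_ne_nil hk0
        cases hbk : Nat.bits k with
        | nil => exact absurd hbk hne
        | cons c l =>
          rw [List.getLast?_cons_cons, ← hbk]
          exact ih k (by omega)
      · rw [hk, Nat.bit1_bits]
        cases hbk : Nat.bits k with
        | nil => simp
        | cons c l =>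
          rw [List.getLast?_cons_cons, ← hbk]
          exact ih k (by omega)

def ofBits : List Bool → ℕ
  | [] => 0
  | b :: v => 2 * ofBits v + b.toNat

lemma bits_ofBits : ∀ w : List Bool, w.getLast? ≠ some false → Nat.bits (ofBits w) = w := by
  intro w
  induction w with
  | nil => intro _; exact Nat.zero_bits
  | cons b v ih =>
    intro hv
    have hvlast : v.getLast? ≠ some false := by
      cases v with
      | nil => simp
      | cons c l =>
        rw [List.getLast?_cons_cons] at hv
        exact hv
    have hbv := ih hvlast
    cases b with
    | true =>
      show Nat.bits (2 * ofBits v + 1) = true :: v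
      rw [Nat.bit1_bits, hbv]
    | false =>
      have hvne : v ≠ [] := by rintro rfl; simp at hv
      have h0 : ofBits v ≠ 0 := by
        intro h
        rw [h, Nat.zero_bits] at hbv
        exact hvne hbv.symm
      show Nat.bits (2 * ofBits v + Bool.toNat false) = false :: v
      rw [show Bool.toNat false = 0 from rfl, Nat.add_zero, Nat.bit0_bits _ h0, hbv]

lemma ofBits_bits : ∀ n : ℕ, ofBits (Nat.bits n) = n := by
  intro n
  induction n using Nat.strong_induction_on with
  | _ n ih =>
    match n with
    | 0 => rw [Nat.zero_bits]; rfl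
    | m + 1 =>
      rcases Nat.even_or_odd (m + 1) with ⟨k, hk⟩ | ⟨k, hk⟩
      · have hk0 : k ≠ 0 := by omega
        rw [hk, ← two_mul, Nat.bit0_bits _ hk0]
        show 2 * ofBits (Nat.bits k) + Bool.toNat false = 2 * k
        rw [ih k (by omega)]
        rfl
      · rw [hk, Nat.bit1_bits]
        show 2 * ofBits (Nat.bits k) + Bool.toNat true = 2 * k + 1
        rw [ih k (by omega)]
        rfl

lemma bits_injective {n m : ℕ} (h : Nat.bits n = Nat.bits m) : n = m := by
  have := congrArg ofBits h
  rwa [ofBits_bits, ofBits_bits] at this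

lemma le_of_bits_sublist {k n : ℕ} (h : Nat.bits k <+ Nat.bits n) : k ≤ n := by
  rcases eq_or_lt_of_le h.length_le with heq | hlt
  · have := h.eq_of_length heq
    exact le_of_eq (bits_injective this)
  · rw [Nat.size_eq_bits_len, Nat.size_eq_bits_len] at hlt
    have h1 : k < 2 ^ Nat.size k := Nat.lt_size_self k
    have h2 : 2 ^ Nat.size k ≤ n := Nat.lt_size.mp hlt
    omega

lemma genPascalRow_eq (n : ℕ) :
    genPascalRow n = ((SL (Nat.bits n)).filter (fun w => w.getLast? ≠ some false)).card := by
  unfold genPascalRow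
  apply Finset.card_bij (fun k _ => Nat.bits k)
  · intro k hk
    simp only [Finset.mem_filter, Finset.mem_range] at hk
    simp only [Finset.mem_filter, mem_SL]
    exact ⟨(wordBinom_ne_zero _ _).mp hk.2, bits_getLast? k⟩
  · intro a _ b _ hab
    exact bits_injective hab
  · intro w hw
    simp only [Finset.mem_filter, mem_SL] at hw
    have hb := bits_ofBits w hw.2
    refine ⟨ofBits w, ?_, hb⟩
    simp only [Finset.mem_filter, Finset.mem_range]
    have hsub : Nat.bits (ofBits w) <+ Nat.bits n := by rw [hb]; exact hw.1
    constructor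
    · have := le_of_bits_sublist hsub
      omega
    · exact (wordBinom_ne_zero _ _).mpr hsub

lemma dual (u : List Bool) : ∀ s w : ℕ × ℕ,
    (u.foldr qstep w).1 * s.1 + (u.foldr qstep w).2 * s.2 =
      w.1 * (u.foldl pstep s).1 + w.2 * (u.foldl pstep s).2 := by
  induction u with
  | nil => intro s w; simp
  | cons b v ih =>
    intro s w
    obtain ⟨s1, s2⟩ := s
    rw [List.foldr_cons, List.foldl_cons]
    cases b
    · rcases hX : v.foldr qstep w with ⟨x, y⟩
      have h := ih (pstep (s1, s2) false) w
      rw [hX] at h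
      try rw [hX]
      rw [show qstep false (x, y) = (x, x + y) from rfl]
      rw [show pstep (s1, s2) false = (s1 + s2, s2) from rfl] at h ⊢
      simp only at h ⊢
      rw [← h]
      ring
    · rcases hX : v.foldr qstep w with ⟨x, y⟩
      have h := ih (pstep (s1, s2) true) w
      rw [hX] at h
      try rw [hX]
      rw [show qstep true (x, y) = (x + y, y) from rfl]
      rw [show pstep (s1, s2) true = (s1, s1 + s2) from rfl] at h ⊢
      simp only at h ⊢
      rw [← h]
      ring

lemma sternPair : ∀ n : ℕ, (Nat.bits n).foldr qstep (0, 1) = (stern n, stern (n + 1)) := by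
  intro n
  induction n using Nat.strong_induction_on with
  | _ n ih =>
    match n with
    | 0 => simp [Nat.zero_bits, stern_zero, stern_one]
    | m + 1 =>
      rcases Nat.even_or_odd (m + 1) with ⟨k, hk⟩ | ⟨k, hk⟩
      · have hk0 : k ≠ 0 := by omega
        rw [hk, ← two_mul, Nat.bit0_bits _ hk0, List.foldr_cons, ih k (by omega)]
        rw [show qstep false (stern k, stern (k + 1)) = (stern k, stern k + stern (k + 1)) from rfl]
        rw [show 2 * k + 1 = 2 * k + 1 from rfl, stern_two_mul, stern_two_mul_add_one]
      · rw [hk, Nat.bit1_bits, List.foldr_cons, ih k (by omega)]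
        rw [show qstep true (stern k, stern (k + 1)) = (stern k + stern (k + 1), stern (k + 1)) from rfl]
        rw [stern_two_mul_add_one, show 2 * k + 1 + 1 = 2 * (k + 1) from by ring, stern_two_mul]

lemma genPascalRow_eq_stern (n : ℕ) : genPascalRow n = stern n + stern (n + 1) := by
  have hd := dual (Nat.bits n) (1, 1) (0, 1)
  rw [sternPair n, foldl_pstep] at hd
  simp only [mul_one, one_mul, zero_mul, zero_add] at hd
  rw [genPascalRow_eq, card_valid]
  omega



noncomputable def Tz : ℤ → ℝ := fun i => if 0 ≤ i then (Tn i.toNat : ℝ) else (i : ℝ)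

lemma Tz_nonpos {i : ℤ} (h : i ≤ 0) : Tz i = (i : ℝ) := by
  unfold Tz
  rcases lt_or_eq_of_le h with h' | rfl
  · rw [if_neg (by omega)]
  · rw [if_pos le_rfl]
    simp [Tn_zero]

lemma Tz_ofNat (m : ℕ) : Tz (m : ℤ) = (Tn m : ℝ) := by
  unfold Tz
  rw [if_pos (by positivity)]
  simp

lemma Tz_mono : Monotone Tz := by
  apply monotone_int_of_le_succ
  intro i
  rcases le_or_gt (i + 1) 0 with h | h
  · rw [Tz_nonpos (by omega), Tz_nonpos h]
    push_cast
    linarith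
  · have hi : 0 ≤ i ∨ i = -1 := by omega
    rcases hi with hi | rfl
    · obtain ⟨m, rfl⟩ := Int.eq_ofNat_of_zero_le hi
      rw [Tz_ofNat, show (m : ℤ) + 1 = ((m + 1 : ℕ) : ℤ) from by push_cast; ring, Tz_ofNat]
      exact_mod_cast Nat.le.intro (Tn_succ m).symm
    · rw [Tz_nonpos (by omega), show (-1 : ℤ) + 1 = ((0 : ℕ) : ℤ) from rfl, Tz_ofNat]
      simp [Tn_zero]

noncomputable def ell : ℝ → ℝ :=
  fun x => Tz ⌊x⌋ + (x - ⌊x⌋) * (Tz (⌊x⌋ + 1) - Tz ⌊x⌋)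

lemma ell_int (i : ℤ) : ell (i : ℝ) = Tz i := by
  unfold ell
  rw [Int.floor_intCast]
  ring

lemma ell_lb (x : ℝ) : Tz ⌊x⌋ ≤ ell x := by
  unfold ell
  have h1 : (0 : ℝ) ≤ x - ⌊x⌋ := by
    have := Int.floor_le x
    linarith
  have h2 : Tz ⌊x⌋ ≤ Tz (⌊x⌋ + 1) := Tz_mono (by omega)
  nlinarith

lemma ell_ub (x : ℝ) : ell x ≤ Tz (⌊x⌋ + 1) := by
  unfold ell
  have h1 : x - ⌊x⌋ ≤ 1 := by
    have := Int.lt_floor_add_one x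
    linarith
  have h1' : (0 : ℝ) ≤ x - ⌊x⌋ := by
    have := Int.floor_le x
    linarith
  have h2 : Tz ⌊x⌋ ≤ Tz (⌊x⌋ + 1) := Tz_mono (by omega)
  nlinarith

lemma ell_mono : Monotone ell := by
  intro x y hxy
  rcases eq_or_lt_of_le (Int.floor_le_floor hxy) with heq | hlt
  · unfold ell
    rw [← heq]
    have h2 : Tz ⌊x⌋ ≤ Tz (⌊x⌋ + 1) := Tz_mono (by omega)
    nlinarith [sub_nonneg.mpr hxy]
  · calc ell x ≤ Tz (⌊x⌋ + 1) := ell_ub x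
      _ ≤ Tz ⌊y⌋ := Tz_mono (by omega)
      _ ≤ ell y := ell_lb y

lemma ell_continuous : Continuous ell := by
  have key : ∀ (n : ℤ) (x : ℝ), x ∈ Set.Ico (n : ℝ) (n + 1) →
      ell x = Tz n + (x - n) * (Tz (n + 1) - Tz n) := by
    intro n x hx
    have hf : ⌊x⌋ = n := Int.floor_eq_iff.mpr (by exact_mod_cast hx)
    unfold ell
    rw [hf]
  rw [continuous_iff_continuousAt]
  intro a
  set n := ⌊a⌋ with hn
  have hna : (n : ℝ) ≤ a := Int.floor_le a
  have han : a < (n : ℝ) + 1 := Int.lt_floor_add_one a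
  have gcont : ∀ m : ℤ, Continuous (fun x : ℝ => Tz m + (x - m) * (Tz (m + 1) - Tz m)) := by
    intro m
    fun_prop
  rw [continuousAt_iff_continuous_left_right]
  refine ⟨?_, ?_⟩
  · rcases eq_or_lt_of_le hna with heq | hlt
    · apply ((gcont (n - 1)).continuousAt (x := a)).continuousWithinAt.congr_of_eventuallyEq
      · have hev : ∀ᶠ x in 𝓝[Set.Iic a] a, x ∈ Set.Ioc ((n : ℝ) - 1) a := by
          have h1 : ∀ᶠ x in 𝓝 a, ((n : ℝ) - 1) < x := eventually_gt_nhds (by linarith)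
          filter_upwards [nhdsWithin_le_nhds h1, self_mem_nhdsWithin] with x h1x h2x
          exact ⟨h1x, h2x⟩
        filter_upwards [hev] with x hx
        rcases eq_or_lt_of_le hx.2 with hxa | hxa
        · rw [hxa, ← heq, ell_int]
          have hc : ((n - 1 : ℤ) : ℝ) = (n : ℝ) - 1 := by push_cast; ring
          rw [show n - 1 + 1 = n from by ring, hc]
          ring
        · rw [key (n - 1) x ⟨by push_cast; linarith [hx.1], by push_cast; linarith⟩]
      · rw [← heq, ell_int]
        have hc : ((n - 1 : ℤ) : ℝ) = (n : ℝ) - 1 := by push_cast; ring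
        rw [show n - 1 + 1 = n from by ring, hc]
        ring
    · apply ((gcont n).continuousAt (x := a)).continuousWithinAt.congr_of_eventuallyEq
      · have h1 : ∀ᶠ x in 𝓝 a, (n : ℝ) < x := eventually_gt_nhds hlt
        have h2 : ∀ᶠ x in 𝓝 a, x < (n : ℝ) + 1 := eventually_lt_nhds han
        filter_upwards [nhdsWithin_le_nhds h1, nhdsWithin_le_nhds h2] with x hx1 hx2
        exact key n x ⟨le_of_lt hx1, hx2⟩
      · exact key n a ⟨hna, han⟩
  · apply ((gcont n).continuousAt (x := a)).continuousWithinAt.congr_of_eventuallyEq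
    · have h2 : ∀ᶠ x in 𝓝 a, x < (n : ℝ) + 1 := eventually_lt_nhds han
      filter_upwards [nhdsWithin_le_nhds h2, self_mem_nhdsWithin] with x hx1 hx2
      exact key n x ⟨le_trans hna hx2, hx1⟩
    · exact key n a ⟨hna, han⟩

lemma ell_nonpos {x : ℝ} (h : x ≤ 0) : ell x = x := by
  rcases eq_or_lt_of_le h with rfl | h'
  · rw [show (0:ℝ) = ((0:ℤ):ℝ) from by norm_num, ell_int, Tz_nonpos le_rfl]
  · have hfl : ⌊x⌋ < 0 := Int.floor_lt.mpr (by exact_mod_cast h')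
    unfold ell
    rw [Tz_nonpos (by omega), Tz_nonpos (by omega)]
    push_cast
    ring

lemma ell_nat (m : ℕ) : ell (m : ℝ) = (Tn m : ℝ) := by
  have := ell_int (m : ℤ)
  rw [Tz_ofNat] at this
  rwa [show ((m : ℤ) : ℝ) = (m : ℝ) from by push_cast; ring] at this

lemma Tn_incr_le (m : ℕ) : (Tn (m + 1) : ℝ) - Tn m ≤ 2 * m + 1 := by
  rw [Tn_succ]
  have h1 : (stern m : ℝ) ≤ m := by exact_mod_cast stern_le m
  have h2 : (stern (m + 1) : ℝ) ≤ m + 1 := by exact_mod_cast stern_le (m + 1)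
  push_cast
  linarith

lemma ell_double_est (y : ℝ) : |ell (2 * y) - 3 * ell y| ≤ 6 * |y| + 3 := by
  rcases le_or_gt y 0 with hy | hy
  · rw [ell_nonpos hy, ell_nonpos (by linarith),
      show 2 * y - 3 * y = -y from by ring, abs_neg]
    have := abs_nonneg y
    linarith [le_abs_self y]
  · have hfl : (0:ℤ) ≤ ⌊y⌋ := Int.floor_nonneg.mpr hy.le
    obtain ⟨m, hm⟩ := Int.eq_ofNat_of_zero_le hfl
    have hmy : (m : ℝ) ≤ y := by
      have := Int.floor_le y
      rwa [hm] at this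
    have hym : y ≤ (m : ℝ) + 1 := by
      have := Int.lt_floor_add_one y
      rw [hm] at this
      push_cast at this ⊢
      linarith
    -- bounds for 3 * ell y
    have hb1 : 3 * (Tn m : ℝ) ≤ 3 * ell y := by
      have := ell_lb y
      rw [hm, Tz_ofNat] at this
      linarith
    have hb2 : 3 * ell y ≤ 3 * (Tn (m + 1) : ℝ) := by
      have := ell_ub y
      rw [hm, show ((m : ℤ) + 1) = ((m + 1 : ℕ) : ℤ) from by push_cast; ring, Tz_ofNat] at this
      linarith
    -- bounds for ell (2 * y)
    have e1 : ell ((2 * m : ℕ) : ℝ) = ((3 * Tn m : ℕ) : ℝ) := by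
      rw [ell_nat, Tn_double]
    have e2 : ell ((2 * m + 2 : ℕ) : ℝ) = ((3 * Tn (m + 1) : ℕ) : ℝ) := by
      rw [ell_nat, show 2 * m + 2 = 2 * (m + 1) from by ring, Tn_double]
    have hc1 : 3 * (Tn m : ℝ) ≤ ell (2 * y) := by
      have hmono := ell_mono (show ((2 * m : ℕ) : ℝ) ≤ 2 * y from by push_cast; linarith)
      rw [e1] at hmono
      push_cast at hmono
      linarith
    have hc2 : ell (2 * y) ≤ 3 * (Tn (m + 1) : ℝ) := by
      have hmono := ell_mono (show 2 * y ≤ ((2 * m + 2 : ℕ) : ℝ) from by push_cast; linarith)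
      rw [e2] at hmono
      push_cast at hmono
      linarith
    have hincr := Tn_incr_le m
    have habs : |ell (2 * y) - 3 * ell y| ≤ 3 * (Tn (m + 1) : ℝ) - 3 * (Tn m : ℝ) := by
      rw [abs_le]
      constructor <;> linarith
    have : |y| = y := abs_of_pos hy
    nlinarith

noncomputable def LL (k : ℕ) (x : ℝ) : ℝ := ell (2 ^ k * x) / 3 ^ k

lemma LL_cont (k : ℕ) : Continuous (LL k) := by
  unfold LL
  exact (ell_continuous.comp (by fun_prop)).div_const _

lemma LL_diff (k : ℕ) (x : ℝ) :
    LL (k + 1) x - LL k x = (ell (2 * (2 ^ k * x)) - 3 * ell (2 ^ k * x)) / 3 ^ (k + 1) := by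
  unfold LL
  rw [show (2:ℝ) ^ (k + 1) * x = 2 * (2 ^ k * x) from by ring, pow_succ]
  have h3 : (3:ℝ) ^ k ≠ 0 := by positivity
  field_simp

lemma LL_diff_bound (k : ℕ) (x : ℝ) :
    |LL (k + 1) x - LL k x| ≤ (6 * (2 ^ k * |x|) + 3) / 3 ^ (k + 1) := by
  rw [LL_diff, abs_div, abs_of_pos (show (0:ℝ) < 3 ^ (k + 1) from by positivity)]
  gcongr
  refine le_trans (ell_double_est (2 ^ k * x)) ?_
  rw [abs_mul, abs_of_pos (show (0:ℝ) < 2 ^ k from by positivity)]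

noncomputable def ub (R : ℝ) (k : ℕ) : ℝ := 2 * R * (2 / 3) ^ k + (1 / 3) ^ k

lemma ub_eq (R : ℝ) (k : ℕ) : (6 * (2 ^ k * R) + 3) / 3 ^ (k + 1) = ub R k := by
  unfold ub
  have h3 : (3:ℝ) ^ k ≠ 0 := by positivity
  rw [div_pow, div_pow, one_pow]
  field_simp
  ring

lemma ub_summable (R : ℝ) : Summable (ub R) := by
  unfold ub
  exact ((summable_geometric_of_lt_one (by norm_num) (by norm_num)).mul_left _).add
    (summable_geometric_of_lt_one (by norm_num) (by norm_num))

noncomputable def HH : ℝ → ℝ := fun x => LL 0 x + ∑' k, (LL (k + 1) x - LL k x)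

lemma HH_bound_mem {R x : ℝ} (hx : |x| ≤ R) (k : ℕ) :
    ‖LL (k + 1) x - LL k x‖ ≤ ub R k := by
  rw [Real.norm_eq_abs, ← ub_eq]
  refine le_trans (LL_diff_bound k x) ?_
  gcongr

lemma HH_tendsto (x : ℝ) : Filter.Tendsto (fun k => LL k x) Filter.atTop (𝓝 (HH x)) := by
  have hs : Summable (fun k => LL (k + 1) x - LL k x) :=
    Summable.of_norm_bounded (ub_summable |x|) (fun k => HH_bound_mem le_rfl k)
  have h2 := hs.hasSum.tendsto_sum_nat
  have h3 : Filter.Tendsto (fun K => LL K x - LL 0 x) Filter.atTop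
      (𝓝 (∑' k, (LL (k + 1) x - LL k x))) := by
    refine h2.congr (fun K => ?_)
    exact Finset.sum_range_sub (fun k => LL k x) K
  have h4 := h3.add_const (LL 0 x)
  have h5 : Filter.Tendsto (fun K => LL K x) Filter.atTop
      (𝓝 ((∑' k, (LL (k + 1) x - LL k x)) + LL 0 x)) :=
    h4.congr (fun K => by ring)
  have : HH x = (∑' k, (LL (k + 1) x - LL k x)) + LL 0 x := by unfold HH; ring
  rwa [← this] at h5

lemma HH_continuous : Continuous HH := by
  rw [continuous_iff_continuousAt]
  intro a
  set R := |a| + 1 with hR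
  have hs : ContinuousOn (fun x => ∑' k, (LL (k + 1) x - LL k x)) (Metric.ball 0 R) := by
    apply continuousOn_tsum
      (fun k => ((LL_cont (k + 1)).sub (LL_cont k)).continuousOn) (ub_summable R)
    intro k x hx
    have hxR : |x| ≤ R := by
      have := Metric.mem_ball.mp hx
      rw [Real.dist_eq, sub_zero] at this
      linarith
    exact HH_bound_mem hxR k
  have hco : ContinuousOn HH (Metric.ball 0 R) := (LL_cont 0).continuousOn.add hs
  refine hco.continuousAt (Metric.isOpen_ball.mem_nhds ?_)
  rw [Metric.mem_ball, Real.dist_eq, sub_zero]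
  linarith [abs_nonneg a]

lemma HH_nat (m : ℕ) : HH m = (Tn m : ℝ) := by
  refine tendsto_nhds_unique (HH_tendsto m) ?_
  have hconst : ∀ k, LL k m = (Tn m : ℝ) := by
    intro k
    unfold LL
    rw [show (2:ℝ) ^ k * m = ((2 ^ k * m : ℕ) : ℝ) from by push_cast; ring, ell_nat, Tn_pow]
    push_cast
    have h3 : (3:ℝ) ^ k ≠ 0 := by positivity
    field_simp
  exact (tendsto_const_nhds).congr (fun k => (hconst k).symm)

lemma HH_double (x : ℝ) : HH (2 * x) = 3 * HH x := by
  refine tendsto_nhds_unique (HH_tendsto (2 * x)) ?_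
  have h1 : Filter.Tendsto (fun k => LL (k + 1) x) Filter.atTop (𝓝 (HH x)) :=
    (HH_tendsto x).comp (Filter.tendsto_add_atTop_nat 1)
  have h2 := h1.const_mul (3:ℝ)
  refine h2.congr (fun k => ?_)
  unfold LL
  rw [show (2:ℝ) ^ k * (2 * x) = 2 ^ (k + 1) * x from by ring, pow_succ]
  have h3 : (3:ℝ) ^ k ≠ 0 := by positivity
  field_simp
  ring

noncomputable def Phi : ℝ → ℝ :=
  fun u => HH (Real.exp (Real.log 2 * u)) / Real.exp (Real.log 3 * u)

lemma Phi_continuous : Continuous Phi :=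
  (HH_continuous.comp (by fun_prop)).div (by fun_prop) (fun u => Real.exp_ne_zero _)

lemma Phi_periodic (u : ℝ) : Phi (u + 1) = Phi u := by
  unfold Phi
  rw [mul_add, mul_one, mul_add, mul_one, Real.exp_add, Real.exp_add,
    Real.exp_log two_pos, Real.exp_log (show (0:ℝ) < 3 from by norm_num),
    mul_comm (Real.exp (Real.log 2 * u)) 2, HH_double]
  rw [div_eq_div_iff (by positivity) (by positivity)]
  ring

lemma Phi_int_sub (u : ℝ) (m : ℤ) : Phi (u - m) = Phi u := by
  have hp : Function.Periodic Phi 1 := Phi_periodic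
  have := hp.sub_int_mul_eq (x := u) m
  simpa using this

lemma Phi_eval (N : ℕ) (hN : 1 ≤ N) :
    (N : ℝ) ^ Real.logb 2 3 * Phi (Real.logb 2 N - ⌊Real.logb 2 N⌋) = (Tn N : ℝ) := by
  have hNpos : (0:ℝ) < N := by exact_mod_cast hN
  rw [Phi_int_sub]
  unfold Phi
  have h2ne : Real.log 2 ≠ 0 := ne_of_gt (Real.log_pos (by norm_num))
  have h2 : Real.exp (Real.log 2 * Real.logb 2 N) = N := by
    rw [Real.logb, mul_div_cancel₀ _ h2ne, Real.exp_log hNpos]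
  rw [h2, HH_nat]
  have h3 : (N:ℝ) ^ Real.logb 2 3 = Real.exp (Real.log 3 * Real.logb 2 N) := by
    rw [Real.rpow_def_of_pos hNpos]
    congr 1
    rw [Real.logb, Real.logb]
    ring
  rw [h3, mul_comm, div_mul_cancel₀ _ (Real.exp_ne_zero _)]

lemma sum_genPascalRow (N : ℕ) : (∑ n ∈ Finset.range N, genPascalRow n) = Tn N := by
  induction N with
  | zero => simp [Tn_zero]
  | succ m ih => rw [Finset.sum_range_succ, ih, genPascalRow_eq_stern, Tn_succ]

/-- **Theorem (exact formula for the number of non-zero entries in the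
generalized Pascal's triangle).**

Let `z(n)` be the number of non-zero entries in row `n` of the generalized
Pascal's triangle, let `d` be Stern's diatomic sequence and `κ = log₂ 3`.  Then
there is a `1`-periodic continuous function `Φ : ℝ → ℝ` such that for every
`N ≥ 1` both `Σ_{0 ≤ n < N} z(n) = N^κ Φ({log₂ N})` and
`Σ_{0 ≤ n < N} d(n) + d(N)/2 = (1/2) N^κ Φ({log₂ N})` hold (i.e. `Φ_Z = 2 Φ_D`). -/
theorem gen_pascal_summatory_exact
    (d : ℕ → ℕ) (hd0 : d 0 = 0) (hd1 : d 1 = 1)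
    (hde : ∀ n : ℕ, d (2 * n) = d n)
    (hdo : ∀ n : ℕ, d (2 * n + 1) = d n + d (n + 1)) :
    ∃ Φ : ℝ → ℝ, Continuous Φ ∧ (∀ u : ℝ, Φ (u + 1) = Φ u) ∧
      ∀ N : ℕ, 1 ≤ N →
        (∑ n ∈ Finset.range N, (genPascalRow n : ℝ)) =
            (N : ℝ) ^ Real.logb 2 3 * Φ (Real.logb 2 N - ⌊Real.logb 2 N⌋) ∧
        (∑ n ∈ Finset.range N, (d n : ℝ)) + (d N : ℝ) / 2 =
            (1 / 2) * (N : ℝ) ^ Real.logb 2 3 *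
              Φ (Real.logb 2 N - ⌊Real.logb 2 N⌋) := by
  classical
  have hds : ∀ n, d n = stern n := d_eq_stern d hd0 hd1 hde hdo
  refine ⟨Phi, Phi_continuous, Phi_periodic, ?_⟩
  intro N hN
  have hsum : (∑ n ∈ Finset.range N, genPascalRow n) = Tn N := sum_genPascalRow N
  constructor
  · rw [show (∑ n ∈ Finset.range N, (genPascalRow n : ℝ)) = ((Tn N : ℕ) : ℝ) from by
      exact_mod_cast congrArg (Nat.cast (R := ℝ)) hsum]
    exact (Phi_eval N hN).symm
  · rw [mul_assoc, Phi_eval N hN]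
    have hTn : (Tn N : ℝ) = 2 * (∑ n ∈ Finset.range N, (stern n : ℝ)) + (stern N : ℝ) := by
      unfold Tn
      push_cast
      ring
    have hsd : (∑ n ∈ Finset.range N, (d n : ℝ)) = ∑ n ∈ Finset.range N, (stern n : ℝ) := by
      refine Finset.sum_congr rfl (fun n _ => ?_)
      rw [hds n]
    rw [hsd, hds N, hTn]
    ring
end

section
/- Let B₀ and B₁ be the 4×4 integer matrices B₀ = [[2,0,0,0],[0,1,0,0],[0,1,0,1],[0,−1,1,0]] and B₁ = [[0,0,2,0],[0,0,0,1],[0,−1,1,1],[0,2,0,1]]. Then the joint spectral radius of ℬ = {B₀, B₁} equals 2 and ℬ has the simple growth property; concretely: there exists a constant C such that ‖G₁⋯G_k‖ ≤ C·2^k for all k ≥ 1 and all G₁, …, G_k ∈ {B₀, B₁}, and the (1,1)-entry of B₀^k equals 2^k for all k ≥ 0, so that ‖B₀^k‖ ≥ 2^k for all k. -/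
open scoped BigOperators

attribute [local instance] Matrix.linftyOpNormedRing

/-- The joint spectral radius of a finite family of square complex matrices,
defined (following Rota–Strang) as
`inf_{k ≥ 1} max {‖G₁ ⋯ G_k‖^{1/k} : G₁, …, G_k ∈ 𝒢}`,
which coincides with the limit `lim_{k → ∞} max {‖G₁ ⋯ G_k‖^{1/k}}`.
The norm is the row sum norm; the value is independent of the chosen norm. -/
noncomputable def jsr {n ι : Type*} [Fintype n] [DecidableEq n] [Fintype ι]
    (A : ι → Matrix n n ℂ) : ℝ :=
  ⨅ k : ℕ, ⨆ w : Fin (k + 1) → ι,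
    ‖(List.ofFn fun i => A (w i)).prod‖ ^ ((k + 1 : ℝ)⁻¹)

/-- A finite family `A` of square matrices has the simple growth property if
`‖G₁ ⋯ G_k‖ = O(ρ(𝒢)^k)` for products of matrices of the family. -/
def HasSimpleGrowth {n ι : Type*} [Fintype n] [DecidableEq n] [Fintype ι]
    (A : ι → Matrix n n ℂ) : Prop :=
  ∃ C : ℝ, ∀ k : ℕ, 1 ≤ k → ∀ w : Fin k → ι,
    ‖(List.ofFn fun i => A (w i)).prod‖ ≤ C * jsr A ^ k

/-- The weights for the adapted norm. -/
noncomputable def tmWeight : Fin 4 → ℝ := ![3, 1, 3, 2]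

lemma tmWeight_one_le : ∀ j, (1 : ℝ) ≤ tmWeight j := by
  intro j; fin_cases j <;> norm_num [tmWeight]

lemma tmWeight_le_three : ∀ j, tmWeight j ≤ 3 := by
  intro j; fin_cases j <;> norm_num [tmWeight]

lemma tm_norm_le_of_rows (A : Matrix (Fin 4) (Fin 4) ℂ) (c : ℝ)
    (h : ∀ i, ∑ j, ‖A i j‖ ≤ c) : ‖A‖ ≤ c := by
  rw [Matrix.linfty_opNorm_def]
  have hc : (0:ℝ) ≤ c := le_trans (Finset.sum_nonneg fun j _ => norm_nonneg _) (h 0)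
  rw [← Real.coe_toNNReal c hc, NNReal.coe_le_coe]
  refine Finset.sup_le fun i _ => ?_
  rw [← NNReal.coe_le_coe, Real.coe_toNNReal c hc]
  push_cast
  exact h i

lemma tm_row_le_norm (A : Matrix (Fin 4) (Fin 4) ℂ) (i : Fin 4) :
    ∑ j, ‖A i j‖ ≤ ‖A‖ := by
  rw [Matrix.linfty_opNorm_def]
  have := Finset.le_sup (f := fun i : Fin 4 => ∑ j, ‖A i j‖₊) (Finset.mem_univ i)
  rw [← NNReal.coe_le_coe] at this
  push_cast at this
  exact this

lemma tm_single_row (B₀ B₁ : Matrix (Fin 4) (Fin 4) ℂ)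
    (hB₀ : B₀ = !![2, 0, 0, 0; 0, 1, 0, 0; 0, 1, 0, 1; 0, -1, 1, 0])
    (hB₁ : B₁ = !![0, 0, 2, 0; 0, 0, 0, 1; 0, -1, 1, 1; 0, 2, 0, 1])
    (B : Matrix (Fin 4) (Fin 4) ℂ) (hB : B = B₀ ∨ B = B₁) :
    ∀ i, ∑ j, ‖B i j‖ * tmWeight j ≤ 2 * tmWeight i := by
  rcases hB with h | h <;> subst h <;> subst hB₀ <;> subst hB₁ <;> intro i <;>
    fin_cases i <;> simp [tmWeight, Fin.sum_univ_four] <;> norm_num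

lemma tm_prod_row (B₀ B₁ : Matrix (Fin 4) (Fin 4) ℂ)
    (hB₀ : B₀ = !![2, 0, 0, 0; 0, 1, 0, 0; 0, 1, 0, 1; 0, -1, 1, 0])
    (hB₁ : B₁ = !![0, 0, 2, 0; 0, 0, 0, 1; 0, -1, 1, 1; 0, 2, 0, 1])
    (L : List (Matrix (Fin 4) (Fin 4) ℂ)) (hL : ∀ G ∈ L, G = B₀ ∨ G = B₁) :
    ∀ i, ∑ j, ‖L.prod i j‖ * tmWeight j ≤ 2 ^ L.length * tmWeight i := by
  induction L with
  | nil =>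
      intro i
      fin_cases i <;>
        simp [Matrix.one_apply, Fin.sum_univ_four, tmWeight]
  | cons B T ih =>
      intro i
      have hB : B = B₀ ∨ B = B₁ := hL B List.mem_cons_self
      have hT := ih (fun G hG => hL G (List.mem_cons_of_mem B hG))
      have hrow := tm_single_row B₀ B₁ hB₀ hB₁ B hB
      set P := T.prod with hP
      have hlen : (B :: T).length = T.length + 1 := rfl
      have hprod : (B :: T).prod = B * P := by simp [hP]
      rw [hprod, hlen]
      calc ∑ j, ‖(B * P) i j‖ * tmWeight j
          ≤ ∑ j, (∑ l, ‖B i l‖ * ‖P l j‖) * tmWeight j := by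
            refine Finset.sum_le_sum fun j _ => ?_
            refine mul_le_mul_of_nonneg_right ?_ (le_trans zero_le_one (tmWeight_one_le j))
            rw [Matrix.mul_apply]
            refine le_trans (norm_sum_le _ _) ?_
            refine Finset.sum_le_sum fun l _ => ?_
            rw [norm_mul]
        _ = ∑ l, ‖B i l‖ * (∑ j, ‖P l j‖ * tmWeight j) := by
            simp_rw [Finset.sum_mul, Finset.mul_sum, mul_assoc]
            rw [Finset.sum_comm]
        _ ≤ ∑ l, ‖B i l‖ * (2 ^ T.length * tmWeight l) := by
            refine Finset.sum_le_sum fun l _ => ?_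
            exact mul_le_mul_of_nonneg_left (hT l) (norm_nonneg _)
        _ = 2 ^ T.length * ∑ l, ‖B i l‖ * tmWeight l := by
            rw [Finset.mul_sum]
            exact Finset.sum_congr rfl fun l _ => by ring
        _ ≤ 2 ^ T.length * (2 * tmWeight i) := by
            exact mul_le_mul_of_nonneg_left (hrow i) (by positivity)
        _ = 2 ^ (T.length + 1) * tmWeight i := by ring

lemma tm_prod_norm_le (B₀ B₁ : Matrix (Fin 4) (Fin 4) ℂ)
    (hB₀ : B₀ = !![2, 0, 0, 0; 0, 1, 0, 0; 0, 1, 0, 1; 0, -1, 1, 0])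
    (hB₁ : B₁ = !![0, 0, 2, 0; 0, 0, 0, 1; 0, -1, 1, 1; 0, 2, 0, 1])
    (L : List (Matrix (Fin 4) (Fin 4) ℂ)) (hL : ∀ G ∈ L, G = B₀ ∨ G = B₁) :
    ‖L.prod‖ ≤ 3 * 2 ^ L.length := by
  refine tm_norm_le_of_rows _ _ fun i => ?_
  calc ∑ j, ‖L.prod i j‖
      ≤ ∑ j, ‖L.prod i j‖ * tmWeight j :=
        Finset.sum_le_sum fun j _ =>
          le_mul_of_one_le_right (norm_nonneg _) (tmWeight_one_le j)
    _ ≤ 2 ^ L.length * tmWeight i := tm_prod_row B₀ B₁ hB₀ hB₁ L hL i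
    _ ≤ 2 ^ L.length * 3 :=
        mul_le_mul_of_nonneg_left (tmWeight_le_three i) (by positivity)
    _ = 3 * 2 ^ L.length := by ring

lemma tm_mem_prod (B₀ B₁ : Matrix (Fin 4) (Fin 4) ℂ) {k : ℕ} (w : Fin k → Fin 2) :
    ∀ G ∈ (List.ofFn fun i => (![B₀, B₁]) (w i)), G = B₀ ∨ G = B₁ := by
  intro G hG
  rw [List.mem_ofFn] at hG
  obtain ⟨i, hi⟩ := hG
  have hi' : (![B₀, B₁]) (w i) = G := hi
  have h2 : ∀ t : Fin 2, t = 0 ∨ t = 1 := by decide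
  rcases h2 (w i) with h | h
  · left; rw [h] at hi'; simpa using hi'.symm
  · right; rw [h] at hi'; simpa using hi'.symm

lemma tm_B0_pow_entry (B₀ : Matrix (Fin 4) (Fin 4) ℂ)
    (hB₀ : B₀ = !![2, 0, 0, 0; 0, 1, 0, 0; 0, 1, 0, 1; 0, -1, 1, 0]) :
    ∀ k : ℕ, (B₀ ^ k) 0 0 = 2 ^ k := by
  intro k
  induction k with
  | zero => simp [Matrix.one_apply]
  | succ n ih =>
      rw [pow_succ, Matrix.mul_apply, Fin.sum_univ_four]
      have h1 : B₀ 0 0 = 2 := by simp [hB₀, Matrix.vecHead, Matrix.vecTail]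
      have h2 : B₀ 1 0 = 0 := by simp [hB₀, Matrix.vecHead, Matrix.vecTail]
      have h3 : B₀ 2 0 = 0 := by simp [hB₀, Matrix.vecHead, Matrix.vecTail]
      have h4 : B₀ 3 0 = 0 := by simp [hB₀, Matrix.vecHead, Matrix.vecTail]
      rw [h1, h2, h3, h4, ih]
      ring

/-- **Lemma (joint spectral radius for the unbordered-factor matrices).**

For the matrices `B₀` and `B₁` arising from the `2`-recursive structure of the
number of unbordered factors in the Thue–Morse sequence, the joint spectral
radius of `ℬ = {B₀, B₁}` is `2` and `ℬ` has the simple growth property;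
concretely, `‖G₁ ⋯ G_k‖ ≤ C · 2^k` for all products, the `(1,1)`-entry of
`B₀^k` is `2^k`, and hence `‖B₀^k‖ ≥ 2^k`. -/
theorem tm_unbordered_jsr
    (B₀ B₁ : Matrix (Fin 4) (Fin 4) ℂ)
    (hB₀ : B₀ = !![2, 0, 0, 0; 0, 1, 0, 0; 0, 1, 0, 1; 0, -1, 1, 0])
    (hB₁ : B₁ = !![0, 0, 2, 0; 0, 0, 0, 1; 0, -1, 1, 1; 0, 2, 0, 1]) :
    jsr ![B₀, B₁] = 2 ∧
    HasSimpleGrowth ![B₀, B₁] ∧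
    (∃ C : ℝ, ∀ k : ℕ, 1 ≤ k → ∀ w : Fin k → Fin 2,
      ‖(List.ofFn fun i => (![B₀, B₁]) (w i)).prod‖ ≤ C * 2 ^ k) ∧
    (∀ k : ℕ, (B₀ ^ k) 0 0 = 2 ^ k) ∧
    (∀ k : ℕ, (2 : ℝ) ^ k ≤ ‖B₀ ^ k‖) := by
  -- uniform bound on products
  have hbound : ∀ (k : ℕ) (w : Fin k → Fin 2),
      ‖(List.ofFn fun i => (![B₀, B₁]) (w i)).prod‖ ≤ 3 * 2 ^ k := by
    intro k w
    have := tm_prod_norm_le B₀ B₁ hB₀ hB₁ _ (tm_mem_prod B₀ B₁ w)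
    simpa using this
  -- entry of powers
  have hentry := tm_B0_pow_entry B₀ hB₀
  -- lower bound on norm of powers
  have hlow : ∀ k : ℕ, (2 : ℝ) ^ k ≤ ‖B₀ ^ k‖ := by
    intro k
    have h1 : (2 : ℝ) ^ k = ‖(B₀ ^ k) 0 0‖ := by
      rw [hentry k]
      rw [show ((2 : ℂ) ^ k) = ((2 ^ k : ℝ) : ℂ) by push_cast; ring]
      rw [Complex.norm_real]
      exact (abs_of_nonneg (by positivity)).symm
    rw [h1]
    calc ‖(B₀ ^ k) 0 0‖
        ≤ ∑ j, ‖(B₀ ^ k) 0 j‖ :=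
          Finset.single_le_sum (fun j _ => norm_nonneg _) (Finset.mem_univ 0)
      _ ≤ ‖B₀ ^ k‖ := tm_row_le_norm _ 0
  -- lower bound on the sup over words of length k+1
  have hflow : ∀ k : ℕ, (2 : ℝ) ≤ ⨆ w : Fin (k + 1) → Fin 2,
      ‖(List.ofFn fun i => (![B₀, B₁]) (w i)).prod‖ ^ ((k + 1 : ℝ)⁻¹) := by
    intro k
    have hterm : (2 : ℝ) ≤
        ‖(List.ofFn fun i : Fin (k+1) => (![B₀, B₁]) ((fun _ => (0 : Fin 2)) i)).prod‖
          ^ ((k + 1 : ℝ)⁻¹) := by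
      have hprod : (List.ofFn fun i : Fin (k+1) => (![B₀, B₁]) ((fun _ => (0 : Fin 2)) i)).prod
          = B₀ ^ (k+1) := by
        simp [List.ofFn_const, List.prod_replicate, ← pow_succ']
      rw [hprod]
      have h2 : ((2 : ℝ) ^ (k+1)) ^ ((k + 1 : ℝ)⁻¹) = 2 := by
        rw [← Real.rpow_natCast 2 (k+1), ← Real.rpow_mul (by norm_num)]
        rw [show ((k+1 : ℕ) : ℝ) * (k + 1 : ℝ)⁻¹ = 1 by
          push_cast; field_simp]
        exact Real.rpow_one 2
      rw [← h2]
      exact Real.rpow_le_rpow (by positivity) (hlow (k+1)) (by positivity)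
    refine le_trans hterm ?_
    exact le_ciSup (f := fun w : Fin (k + 1) → Fin 2 =>
        ‖(List.ofFn fun i => (![B₀, B₁]) (w i)).prod‖ ^ ((k + 1 : ℝ)⁻¹))
      (Set.Finite.bddAbove (Set.finite_range _)) (fun _ => (0 : Fin 2))
  -- upper bound on the sup
  have hfupper : ∀ k : ℕ, (⨆ w : Fin (k + 1) → Fin 2,
      ‖(List.ofFn fun i => (![B₀, B₁]) (w i)).prod‖ ^ ((k + 1 : ℝ)⁻¹))
      ≤ (3 : ℝ) ^ ((k + 1 : ℝ)⁻¹) * 2 := by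
    intro k
    refine ciSup_le fun w => ?_
    have h1 : ‖(List.ofFn fun i => (![B₀, B₁]) (w i)).prod‖ ^ ((k + 1 : ℝ)⁻¹)
        ≤ (3 * 2 ^ (k+1) : ℝ) ^ ((k + 1 : ℝ)⁻¹) :=
      Real.rpow_le_rpow (norm_nonneg _) (hbound (k+1) w) (by positivity)
    refine le_trans h1 ?_
    rw [Real.mul_rpow (by norm_num) (by positivity)]
    refine mul_le_mul_of_nonneg_left ?_ (Real.rpow_nonneg (by norm_num) _)
    rw [← Real.rpow_natCast 2 (k+1), ← Real.rpow_mul (by norm_num)]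
    rw [show ((k+1 : ℕ) : ℝ) * (k + 1 : ℝ)⁻¹ = 1 by push_cast; field_simp]
    rw [Real.rpow_one]
  -- jsr value
  have hjsr2 : jsr ![B₀, B₁] = 2 := by
    have hjsr : jsr ![B₀, B₁] = ⨅ k : ℕ, ⨆ w : Fin (k + 1) → Fin 2,
        ‖(List.ofFn fun i => (![B₀, B₁]) (w i)).prod‖ ^ ((k + 1 : ℝ)⁻¹) := rfl
    rw [hjsr]
    have hbdd : BddBelow (Set.range fun k : ℕ => ⨆ w : Fin (k + 1) → Fin 2,
        ‖(List.ofFn fun i => (![B₀, B₁]) (w i)).prod‖ ^ ((k + 1 : ℝ)⁻¹)) :=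
      ⟨2, fun x ⟨k, hk⟩ => hk ▸ hflow k⟩
    refine le_antisymm ?_ (le_ciInf hflow)
    have htend : Filter.Tendsto (fun k : ℕ => (3 : ℝ) ^ ((k + 1 : ℝ)⁻¹) * 2)
        Filter.atTop (nhds 2) := by
      have h0 : Filter.Tendsto (fun k : ℕ => ((k : ℝ) + 1)⁻¹) Filter.atTop (nhds 0) := by
        have : Filter.Tendsto (fun n : ℕ => 1 / ((n : ℝ) + 1)) Filter.atTop (nhds 0) :=
          tendsto_one_div_add_atTop_nhds_zero_nat
        simpa [one_div] using this
      have hcont : ContinuousAt (fun x : ℝ => (3 : ℝ) ^ x) 0 :=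
        Real.continuousAt_const_rpow (by norm_num)
      have h3 : Filter.Tendsto (fun k : ℕ => (3 : ℝ) ^ ((k + 1 : ℝ)⁻¹))
          Filter.atTop (nhds ((3 : ℝ) ^ (0 : ℝ))) := hcont.tendsto.comp h0
      rw [Real.rpow_zero] at h3
      have := h3.mul_const 2
      simpa using this
    refine ge_of_tendsto' htend fun k => ?_
    exact le_trans (ciInf_le hbdd k) (hfupper k)
  refine ⟨hjsr2, ?_, ?_, hentry, hlow⟩
  · refine ⟨3, fun k hk w => ?_⟩
    rw [hjsr2]
    exact hbound k w
  · exact ⟨3, fun k hk w => hbound k w⟩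
end

section
/- Let B₁ be the 4×4 integer matrix B₁ = [[0,0,2,0],[0,0,0,1],[0,−1,1,1],[0,2,0,1]]. Then for every k ≥ 0 the last row of B₁^k equals (0, (2/3)(2^k − (−1)^k), 0, (1/3)(2·2^k + (−1)^k)); in particular, the row sum norm satisfies ‖B₁^k‖_∞ ≥ (4/3)·2^k − (1/3)·(−1)^k > 2^k for all k ≥ 1. -/
open scoped BigOperators

attribute [local instance] Matrix.linftyOpNormedRing

/-- **Remark (failure of the finiteness property for the row sum norm).**

For the matrix `B₁` from the analysis of unbordered factors in the Thue–Morse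
sequence, the last row of `B₁^k` equals
`(0, (2/3)(2^k − (−1)^k), 0, (1/3)(2·2^k + (−1)^k))` for every `k ≥ 0`; in
particular, the row sum norm satisfies
`‖B₁^k‖_∞ ≥ (4/3)·2^k − (1/3)·(−1)^k > 2^k` for all `k ≥ 1`. -/
theorem tm_unbordered_B1_powers
    (B₁ : Matrix (Fin 4) (Fin 4) ℂ)
    (hB₁ : B₁ = !![0, 0, 2, 0; 0, 0, 0, 1; 0, -1, 1, 1; 0, 2, 0, 1]) :
    (∀ k : ℕ,
      (B₁ ^ k) 3 0 = 0 ∧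
      (B₁ ^ k) 3 1 = (2 / 3) * ((2 : ℂ) ^ k - (-1 : ℂ) ^ k) ∧
      (B₁ ^ k) 3 2 = 0 ∧
      (B₁ ^ k) 3 3 = (1 / 3) * (2 * (2 : ℂ) ^ k + (-1 : ℂ) ^ k)) ∧
    ∀ k : ℕ, 1 ≤ k →
      (4 / 3) * (2 : ℝ) ^ k - (1 / 3) * (-1 : ℝ) ^ k ≤ ‖B₁ ^ k‖ ∧
      (2 : ℝ) ^ k < (4 / 3) * (2 : ℝ) ^ k - (1 / 3) * (-1 : ℝ) ^ k := by
  subst hB₁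
  have key : ∀ k : ℕ,
      ((!![0, 0, 2, 0; 0, 0, 0, 1; 0, -1, 1, 1; 0, 2, 0, 1] : Matrix (Fin 4) (Fin 4) ℂ) ^ k) 3 0 = 0 ∧
      ((!![0, 0, 2, 0; 0, 0, 0, 1; 0, -1, 1, 1; 0, 2, 0, 1] : Matrix (Fin 4) (Fin 4) ℂ) ^ k) 3 1 = (2 / 3) * ((2 : ℂ) ^ k - (-1 : ℂ) ^ k) ∧
      ((!![0, 0, 2, 0; 0, 0, 0, 1; 0, -1, 1, 1; 0, 2, 0, 1] : Matrix (Fin 4) (Fin 4) ℂ) ^ k) 3 2 = 0 ∧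
      ((!![0, 0, 2, 0; 0, 0, 0, 1; 0, -1, 1, 1; 0, 2, 0, 1] : Matrix (Fin 4) (Fin 4) ℂ) ^ k) 3 3 = (1 / 3) * (2 * (2 : ℂ) ^ k + (-1 : ℂ) ^ k) := by
    intro k
    induction k with
    | zero => refine ⟨?_, ?_, ?_, ?_⟩ <;> norm_num [Matrix.one_apply, Fin.ext_iff] <;> decide
    | succ n ih =>
      obtain ⟨h0, h1, h2, h3⟩ := ih
      rw [pow_succ]
      refine ⟨?_, ?_, ?_, ?_⟩ <;>
        simp [Matrix.mul_apply, Fin.sum_univ_four, h0, h1, h2, h3,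
          Matrix.cons_val_zero, Matrix.cons_val_one, Matrix.head_cons,
          Matrix.head_fin_const, Matrix.vecHead, Matrix.vecTail] <;> ring
  refine ⟨key, ?_⟩
  intro k hk
  -- basic real facts
  have hneg : |(-1 : ℝ) ^ k| = 1 := by
    rw [abs_pow, abs_neg, abs_one, one_pow]
  have hneg1 : -1 ≤ (-1 : ℝ) ^ k := (abs_le.mp hneg.le).1
  have hneg2 : (-1 : ℝ) ^ k ≤ 1 := (abs_le.mp hneg.le).2
  have h2k : (2 : ℝ) ≤ 2 ^ k := by
    calc (2 : ℝ) = 2 ^ 1 := (pow_one 2).symm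
    _ ≤ 2 ^ k := pow_le_pow_right₀ one_le_two hk
  constructor
  · obtain ⟨h0, h1, h2, h3⟩ := key k
    set A := (!![0, 0, 2, 0; 0, 0, 0, 1; 0, -1, 1, 1; 0, 2, 0, 1] : Matrix (Fin 4) (Fin 4) ℂ) ^ k with hA
    have hrow : ∑ j, ‖A 3 j‖ ≤ ‖A‖ := by
      rw [Matrix.linfty_opNorm_def]
      have h := Finset.le_sup (f := fun i : Fin 4 => ∑ j, ‖A i j‖₊) (Finset.mem_univ (3 : Fin 4))
      have := NNReal.coe_le_coe.mpr h
      simpa [NNReal.coe_sum] using this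
    have ha : A 3 1 = ((2 / 3 * ((2 : ℝ) ^ k - (-1 : ℝ) ^ k) : ℝ) : ℂ) := by
      rw [h1]; push_cast; ring
    have hd : A 3 3 = ((1 / 3 * (2 * (2 : ℝ) ^ k + (-1 : ℝ) ^ k) : ℝ) : ℂ) := by
      rw [h3]; push_cast; ring
    have hsum : ∑ j, ‖A 3 j‖ = (4 / 3) * (2 : ℝ) ^ k - (1 / 3) * (-1 : ℝ) ^ k := by
      rw [Fin.sum_univ_four, h0, h2, ha, hd, norm_zero,
        Complex.norm_real, Complex.norm_real, Real.norm_eq_abs, Real.norm_eq_abs,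
        abs_of_nonneg (by nlinarith), abs_of_nonneg (by nlinarith)]
      ring
    rw [← hsum]
    exact hrow
  · nlinarith
end
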